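/- arXiv:math/0109194 — 8 statements merged into one kernel-verified Lean document; each statement's English description precedes it below -/
import Mathlib

section
/- Let E = E_I ⊔ E_II be a finite set and A a matrix of format E_I × E_II. Define the block matrix L = [[0, A], [−A*, 0]] with respect to this splitting, where A* is the conjugate transpose. Then every principal minor of L is nonnegative: for X ⊆ E with X = P ⊔ Q, P ⊆ E_I, Q ⊆ E_II, one has det L_X = |det A_{P,Q}|² if |P| = |Q| (where A_{P,Q} is the submatrix of A with rows P and columns Q), and det L_X = 0 otherwise. -/
/-!
Grouping the rows and columns of `X` by side, `L_X` becomes `[[0, B], [-B*, 0]]` with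
`B = A_{P,Q}`. If `|P| = |Q|`, then (after matching `P` with `Q`) it equals
`[[0, 1], [-1, 0]] * diag(B*, B)`, of determinant `det B* · det B = |det B|²`. If `|Q| < |P|`,
it equals `diag(B, 1) * [[0, 1], [-B*, 0]]`, which factors through dimension `2|Q| < |P| + |Q|`,
so it is singular; the case `|P| < |Q|` is symmetric.
-/

open Matrix
open scoped ComplexOrder

namespace Matrix

theorem fromBlocks_submatrix_sumMap {l m n o l' m' n' o' α : Type*} (A : Matrix n l α)
    (B : Matrix n m α) (C : Matrix o l α) (D : Matrix o m α) (f₁ : n' → n) (f₂ : o' → o)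
    (g₁ : l' → l) (g₂ : m' → m) :
    (fromBlocks A B C D).submatrix (Sum.map f₁ f₂) (Sum.map g₁ g₂) =
      fromBlocks (A.submatrix f₁ g₁) (B.submatrix f₁ g₂) (C.submatrix f₂ g₁)
        (D.submatrix f₂ g₂) := by
  ext (i | i) (j | j) <;> rfl

variable {m n R : Type*} [Fintype m] [Fintype n] [DecidableEq m] [DecidableEq n]

theorem det_submatrix_mapInl_union_mapInr [CommRing R] {α β : Type*} [DecidableEq α]
    [DecidableEq β] (M : Matrix (α ⊕ β) (α ⊕ β) R) (P : Finset α) (Q : Finset β) :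
    (M.submatrix (Subtype.val : {s // s ∈ P.map ⟨Sum.inl, Sum.inl_injective⟩ ∪
        Q.map ⟨Sum.inr, Sum.inr_injective⟩} → α ⊕ β) Subtype.val).det =
      (M.submatrix (Sum.map ((↑) : P → α) ((↑) : Q → β)) (Sum.map (↑) (↑))).det := by
  let ψ : {s // s ∈ P.map ⟨Sum.inl, Sum.inl_injective⟩ ∪ Q.map ⟨Sum.inr, Sum.inr_injective⟩} ≃
      P ⊕ Q :=
    Equiv.subtypeSum.trans <| Equiv.sumCongr (Equiv.subtypeEquivRight (by simp))
      (Equiv.subtypeEquivRight (by simp))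
  rw [← det_submatrix_equiv_self ψ.symm]
  congr 1
  ext (i | i) (j | j) <;> rfl

theorem det_fromBlocks_zero₁₁_zero₂₂ [CommRing R] (B C : Matrix m m R) :
    (fromBlocks 0 B C 0).det = (-C).det * B.det := by
  have hfactor : fromBlocks 0 B C 0 =
      fromBlocks 1 1 0 1 * fromBlocks 1 1 (-1) 0 * fromBlocks (-C) 0 0 B := by
    simp [fromBlocks_multiply]
  rw [hfactor, det_mul, det_mul, det_fromBlocks_zero₂₁, det_fromBlocks_one₁₁,
    det_fromBlocks_zero₂₁]
  simp

theorem det_mul_eq_zero_of_card_lt [CommRing R] [IsDomain R] {k : Type*} [Fintype k]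
    (U : Matrix m k R) (V : Matrix k m R) (h : Fintype.card k < Fintype.card m) :
    (U * V).det = 0 := by
  by_contra hdet
  have hrank := rank_of_det_ne_zero hdet
  have := (rank_mul_le_left U V).trans (rank_le_card_width U)
  omega

theorem det_fromBlocks_zero₁₁_zero₂₂_of_card_lt [CommRing R] [IsDomain R] (B : Matrix m n R)
    (C : Matrix n m R) (h : Fintype.card n < Fintype.card m) :
    (fromBlocks 0 B C 0).det = 0 := by
  have hfactor : fromBlocks 0 B C 0 =
      fromBlocks B 0 0 (1 : Matrix n n R) * fromBlocks 0 (1 : Matrix n n R) C 0 := by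
    simp [fromBlocks_multiply]
  rw [hfactor]
  exact det_mul_eq_zero_of_card_lt _ _ (by rw [Fintype.card_sum, Fintype.card_sum]; omega)

theorem det_fromBlocks_zero₁₁_zero₂₂_of_card_ne [CommRing R] [IsDomain R] (B : Matrix m n R)
    (C : Matrix n m R) (h : Fintype.card m ≠ Fintype.card n) :
    (fromBlocks 0 B C 0).det = 0 := by
  rcases h.lt_or_gt with h | h
  · rw [← det_submatrix_equiv_self (Equiv.sumComm n m), Equiv.sumComm_apply,
      fromBlocks_submatrix_sum_swap_sum_swap]
    exact det_fromBlocks_zero₁₁_zero₂₂_of_card_lt _ _ h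
  · exact det_fromBlocks_zero₁₁_zero₂₂_of_card_lt _ _ h

variable {𝕜 : Type*} [RCLike 𝕜]

theorem det_fromBlocks_neg_conjTranspose_eq_norm_sq (B : Matrix m n 𝕜) (e : m ≃ n) :
    (fromBlocks 0 B (-Bᴴ) 0).det = (‖(B.submatrix id e).det‖ : 𝕜) ^ 2 := by
  rw [← det_submatrix_equiv_self (Equiv.sumCongr (Equiv.refl m) e),
    show ⇑(Equiv.sumCongr (Equiv.refl m) e) = Sum.map id e from rfl,
    fromBlocks_submatrix_sumMap]
  simp [det_fromBlocks_zero₁₁_zero₂₂, submatrix_neg, ← conjTranspose_submatrix, RCLike.conj_mul]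

theorem det_fromBlocks_neg_conjTranspose_nonneg (B : Matrix m n 𝕜) :
    0 ≤ (fromBlocks 0 B (-Bᴴ) 0).det := by
  by_cases h : Fintype.card m = Fintype.card n
  · obtain ⟨e⟩ := Fintype.card_eq.mp h
    rw [det_fromBlocks_neg_conjTranspose_eq_norm_sq B e]
    exact pow_nonneg (RCLike.ofReal_nonneg.mpr (norm_nonneg _)) 2
  · rw [det_fromBlocks_zero₁₁_zero₂₂_of_card_ne _ _ h]

end Matrix

theorem stmt_5_general {I J : Type*} [DecidableEq I] [DecidableEq J]
    (A : Matrix I J ℂ) (P : Finset I) (Q : Finset J) :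
    let L : Matrix (I ⊕ J) (I ⊕ J) ℂ := Matrix.fromBlocks 0 A (-A.conjTranspose) 0
    let X : Finset (I ⊕ J) :=
      P.map ⟨Sum.inl, Sum.inl_injective⟩ ∪ Q.map ⟨Sum.inr, Sum.inr_injective⟩
    let dX := (L.submatrix (fun a : {s // s ∈ X} => (a : I ⊕ J))
      (fun a : {s // s ∈ X} => (a : I ⊕ J))).det
    (0 ≤ dX.re ∧ dX.im = 0) ∧
    (P.card = Q.card →
      ∀ e : {i // i ∈ P} ≃ {j // j ∈ Q},
        dX = ((‖(A.submatrix (fun p : {i // i ∈ P} => (p : I))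
            (fun p : {i // i ∈ P} => ((e p : {j // j ∈ Q}) : J))).det‖ : ℂ)) ^ 2) ∧
    (P.card ≠ Q.card → dX = 0) := by
  intro L X dX
  set B : Matrix P Q ℂ := A.submatrix (↑) (↑)
  have hdX : dX = (fromBlocks 0 B (-Bᴴ) 0).det := by
    rw [show dX = _ from det_submatrix_mapInl_union_mapInr L P Q, fromBlocks_submatrix_sumMap]
    simp [B, submatrix_neg, conjTranspose_submatrix]
  refine ⟨?_, fun _ e => ?_, fun hPQ => ?_⟩
  · obtain ⟨hre, him⟩ :=
      Complex.nonneg_iff.mp (hdX ▸ det_fromBlocks_neg_conjTranspose_nonneg B)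
    exact ⟨hre, him.symm⟩
  · exact hdX.trans (det_fromBlocks_neg_conjTranspose_eq_norm_sq B e)
  · exact hdX.trans (det_fromBlocks_zero₁₁_zero₂₂_of_card_ne _ _ (by simpa using hPQ))

/-- For the block matrix `L = [[0, A], [-A*, 0]]`, every principal
minor is nonnegative: for `X = P ⊔ Q`, `det L_X = |det A_{P,Q}|²` when
`|P| = |Q|`, and `det L_X = 0` otherwise. -/
theorem stmt_5 {I J : Type*} [Fintype I] [Fintype J] [DecidableEq I] [DecidableEq J]
    (A : Matrix I J ℂ) (P : Finset I) (Q : Finset J) :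
    let L : Matrix (I ⊕ J) (I ⊕ J) ℂ := Matrix.fromBlocks 0 A (-A.conjTranspose) 0
    let X : Finset (I ⊕ J) :=
      P.map ⟨Sum.inl, Sum.inl_injective⟩ ∪ Q.map ⟨Sum.inr, Sum.inr_injective⟩
    let dX := (L.submatrix (fun a : {s // s ∈ X} => (a : I ⊕ J))
      (fun a : {s // s ∈ X} => (a : I ⊕ J))).det
    (0 ≤ dX.re ∧ dX.im = 0) ∧
    (P.card = Q.card →
      ∀ e : {i // i ∈ P} ≃ {j // j ∈ Q},
        dX = ((‖(A.submatrix (fun p : {i // i ∈ P} => (p : I))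
            (fun p : {i // i ∈ P} => ((e p : {j // j ∈ Q}) : J))).det‖ : ℂ)) ^ 2) ∧
    (P.card ≠ Q.card → dX = 0) :=
  stmt_5_general A P Q
end

section
/- Let (z, z') ∈ C². The quantity 1/(Γ(z−k)Γ(z'−k)) is a nonnegative real number for every integer k if and only if either (i) z' = conjugate of z and z is non-real, or (ii) z, z' are real and there is an integer m with m < z < m+1 and m < z' < m+1, or (iii) one of z, z' equals some integer m and the other is a real number greater than m−1. -/
/-!
Write `G k = Γ(z - k) Γ(z' - k)`. When `t < Re z, Re z'` the functional equation gives
`G (t - 1) = (z - t)(z' - t) G t` with `G t ≠ 0`, so nonnegativity of all `G k` forces the monic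
quadratic `(z - s)(z' - s)` to be real at two real points; hence its coefficients are real and
either `z' = conj z` (then `G k = |Γ(z - k)|²`) or `z, z'` are both real. For real `x ≤ y`, the
sign of `Γ` (positive on `(0, ∞)`, negative on `(-1, 0)`) at `k = ⌊x⌋ + 1` rules out
`y > ⌊x⌋ + 1` when `x ∉ ℤ`; conversely `Γ u Γ v > 0` for `u, v` in a common interval `(t, t + 1)`,
and `Γ` vanishes at the nonpositive integers.
-/

open scoped ComplexOrder ComplexConjugate

namespace Real

lemma Gamma_neg_of_neg_one_lt_of_neg {u : ℝ} (h₁ : -1 < u) (h₂ : u < 0) : Gamma u < 0 := by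
  have hpos : 0 < Gamma (u + 1) := Gamma_pos_of_pos (by linarith)
  rw [Gamma_add_one h₂.ne] at hpos
  exact neg_of_mul_pos_right hpos h₂.le

lemma Gamma_intCast_of_nonpos {n : ℤ} (hn : n ≤ 0) : Gamma n = 0 := by
  obtain ⟨m, rfl⟩ := Int.exists_eq_neg_ofNat hn
  simpa using Gamma_neg_nat_eq_zero m

lemma Gamma_mul_Gamma_pos_of_mem_Ioo {t : ℤ} {u v : ℝ} (hu : u ∈ Set.Ioo (t : ℝ) (t + 1))
    (hv : v ∈ Set.Ioo (t : ℝ) (t + 1)) : 0 < Gamma u * Gamma v := by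
  induction t using Int.induction_on generalizing u v with
  | zero =>
    simp only [Int.cast_zero, Set.mem_Ioo] at hu hv
    exact mul_pos (Gamma_pos_of_pos hu.1) (Gamma_pos_of_pos hv.1)
  | succ n _ =>
    simp only [Int.cast_add, Int.cast_natCast, Int.cast_one, Set.mem_Ioo] at hu hv
    have hn : (0 : ℝ) ≤ n := n.cast_nonneg
    exact mul_pos (Gamma_pos_of_pos (by linarith)) (Gamma_pos_of_pos (by linarith))
  | pred n ih =>
    simp only [Int.cast_sub, Int.cast_neg, Int.cast_natCast, Int.cast_one, Set.mem_Ioo] at hu hv ih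
    have hn : (0 : ℝ) ≤ n := n.cast_nonneg
    have hu0 : u < 0 := by linarith
    have hv0 : v < 0 := by linarith
    have h := ih (u := u + 1) (v := v + 1) ⟨by linarith, by linarith⟩ ⟨by linarith, by linarith⟩
    rw [Gamma_add_one hu0.ne, Gamma_add_one hv0.ne,
      show u * Gamma u * (v * Gamma v) = u * v * (Gamma u * Gamma v) by ring] at h
    exact pos_of_mul_pos_right h (mul_pos_of_neg_of_neg hu0 hv0).le

lemma exists_Gamma_sub_mul_Gamma_sub_neg {x y : ℝ} (hy : (⌊y⌋ : ℝ) < y) (hxy : ⌊y⌋ + 1 < x) :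
    ∃ k : ℤ, Gamma (x - k) * Gamma (y - k) < 0 := by
  refine ⟨⌊y⌋ + 1, mul_neg_of_pos_of_neg (Gamma_pos_of_pos ?_)
    (Gamma_neg_of_neg_one_lt_of_neg ?_ ?_)⟩
  · push_cast; linarith
  · push_cast; linarith
  · push_cast; linarith [Int.lt_floor_add_one y]

lemma Gamma_intCast_sub_mul_Gamma_sub_nonneg (m : ℤ) {y : ℝ} (hy : m - 1 < y) (k : ℤ) :
    0 ≤ Gamma (m - k) * Gamma (y - k) := by
  rcases lt_or_ge k m with hk | hk
  · have hk' : (k : ℝ) + 1 ≤ m := by exact_mod_cast hk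
    exact (mul_pos (Gamma_pos_of_pos (by linarith)) (Gamma_pos_of_pos (by linarith))).le
  · rw [show (m : ℝ) - k = ((m - k : ℤ) : ℝ) by push_cast; ring,
      Gamma_intCast_of_nonpos (by omega), zero_mul]

lemma mem_Ioo_or_eq_intCast_of_Gamma_sub_mul_Gamma_sub_nonneg {x y : ℝ} (hxy : x ≤ y)
    (h : ∀ k : ℤ, 0 ≤ Gamma (x - k) * Gamma (y - k)) :
    (∃ m : ℤ, m < x ∧ x < m + 1 ∧ m < y ∧ y < m + 1) ∨
      ∃ m : ℤ, (x = m ∧ m - 1 < y) ∨ (y = m ∧ m - 1 < x) := by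
  rcases (Int.floor_le x).eq_or_lt with hx | hx
  · exact Or.inr ⟨⌊x⌋, Or.inl ⟨hx.symm, by linarith⟩⟩
  have hy : y ≤ ⌊x⌋ + 1 := by
    by_contra! hy
    obtain ⟨k, hk⟩ := exists_Gamma_sub_mul_Gamma_sub_neg hx hy
    exact (h k).not_gt (by rwa [mul_comm])
  rcases hy.eq_or_lt with hy | hy
  · exact Or.inr ⟨⌊x⌋ + 1, Or.inr ⟨by push_cast; exact hy, by push_cast; linarith⟩⟩
  · exact Or.inl ⟨⌊x⌋, hx, Int.lt_floor_add_one x, by linarith, hy⟩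

theorem Gamma_sub_mul_Gamma_sub_nonneg_iff {x y : ℝ} :
    (∀ k : ℤ, 0 ≤ Gamma (x - k) * Gamma (y - k)) ↔
      (∃ m : ℤ, m < x ∧ x < m + 1 ∧ m < y ∧ y < m + 1) ∨
        ∃ m : ℤ, (x = m ∧ m - 1 < y) ∨ (y = m ∧ m - 1 < x) := by
  constructor
  · intro h
    rcases le_total x y with hxy | hyx
    · exact mem_Ioo_or_eq_intCast_of_Gamma_sub_mul_Gamma_sub_nonneg hxy h
    · rcases mem_Ioo_or_eq_intCast_of_Gamma_sub_mul_Gamma_sub_nonneg hyx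
        (fun k ↦ by rw [mul_comm]; exact h k) with ⟨m, h₁, h₂, h₃, h₄⟩ | ⟨m, hm | hm⟩
      · exact Or.inl ⟨m, h₃, h₄, h₁, h₂⟩
      · exact Or.inr ⟨m, Or.inr hm⟩
      · exact Or.inr ⟨m, Or.inl hm⟩
  · rintro (⟨m, h₁, h₂, h₃, h₄⟩ | ⟨m, ⟨rfl, hy⟩ | ⟨rfl, hx⟩⟩) k
    · exact (Gamma_mul_Gamma_pos_of_mem_Ioo (t := m - k)
        ⟨by push_cast; linarith, by push_cast; linarith⟩
        ⟨by push_cast; linarith, by push_cast; linarith⟩).le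
    · exact Gamma_intCast_sub_mul_Gamma_sub_nonneg m hy k
    · rw [mul_comm]; exact Gamma_intCast_sub_mul_Gamma_sub_nonneg m hx k

end Real

namespace Complex

lemma Gamma_sub_mul_Gamma_conj_sub_nonneg (z : ℂ) (k : ℤ) :
    0 ≤ Gamma (z - k) * Gamma (conj z - k) := by
  rw [show conj z - k = conj (z - k) by simp, Gamma_conj, mul_conj]
  exact zero_le_real.mpr (normSq_nonneg _)

lemma Gamma_ofReal_sub_mul_nonneg_iff (x y : ℝ) (k : ℤ) :
    0 ≤ Gamma (x - k) * Gamma (y - k) ↔ 0 ≤ Real.Gamma (x - k) * Real.Gamma (y - k) := by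
  rw [← zero_le_real]
  push_cast [← Gamma_ofReal]
  rfl

lemma sub_mul_sub_nonneg_of_Gamma_sub_mul_Gamma_sub_nonneg {z z' : ℂ}
    (h : ∀ k : ℤ, 0 ≤ Gamma (z - k) * Gamma (z' - k)) {t : ℤ} (hz : t < z.re)
    (hz' : t < z'.re) : 0 ≤ (z - t) * (z' - t) := by
  have hre (w : ℂ) (hw : t < w.re) : 0 < (w - t).re := by simpa using hw
  have hΓ (w : ℂ) (hw : t < w.re) : Gamma (w - (t - 1 : ℤ)) = (w - t) * Gamma (w - t) := by
    rw [← Gamma_add_one _ (fun h0 ↦ by simpa [h0] using hre w hw)]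
    push_cast
    ring_nf
  have hne : Gamma (z - t) * Gamma (z' - t) ≠ 0 :=
    mul_ne_zero (Gamma_ne_zero_of_re_pos (hre z hz)) (Gamma_ne_zero_of_re_pos (hre z' hz'))
  have hquot : (z - t) * (z' - t) =
      Gamma (z - (t - 1 : ℤ)) * Gamma (z' - (t - 1 : ℤ)) / (Gamma (z - t) * Gamma (z' - t)) := by
    rw [hΓ z hz, hΓ z' hz', eq_div_iff hne]
    ring
  exact hquot ▸ div_nonneg (h (t - 1)) (h t)

lemma eq_conj_or_im_eq_zero_of_im_sub_mul_sub_eq_zero {z z' : ℂ} {s t : ℝ} (hst : s ≠ t)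
    (hs : ((z - s) * (z' - s)).im = 0) (ht : ((z - t) * (z' - t)).im = 0) :
    z' = conj z ∨ z.im = 0 ∧ z'.im = 0 := by
  simp only [mul_im, sub_re, sub_im, ofReal_re, ofReal_im, sub_zero] at hs ht
  have hsum : z'.im = -z.im := by
    have : (t - s) * (z.im + z'.im) = 0 := by linear_combination hs - ht
    linarith [(mul_eq_zero.mp this).resolve_left (sub_ne_zero.mpr hst.symm)]
  have hre : z.im * (z'.re - z.re) = 0 := by rw [hsum] at hs; linear_combination hs
  rcases mul_eq_zero.mp hre with him | hre
  · exact Or.inr ⟨him, by rw [hsum, him, neg_zero]⟩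
  · exact Or.inl (ext (by simp; linarith) (by simp [hsum]))

lemma eq_conj_or_im_eq_zero_of_Gamma_sub_mul_Gamma_sub_nonneg {z z' : ℂ}
    (h : ∀ k : ℤ, 0 ≤ Gamma (z - k) * Gamma (z' - k)) : z' = conj z ∨ z.im = 0 ∧ z'.im = 0 := by
  obtain ⟨t, ht⟩ := exists_int_lt (min z.re z'.re - 1)
  have him (s : ℤ) (hs : s ≤ t + 1) : ((z - (s : ℝ)) * (z' - (s : ℝ))).im = 0 := by
    have hs' : (s : ℝ) ≤ t + 1 := by exact_mod_cast hs
    have := sub_mul_sub_nonneg_of_Gamma_sub_mul_Gamma_sub_nonneg h (t := s)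
      (by linarith [min_le_left z.re z'.re]) (by linarith [min_le_right z.re z'.re])
    simpa using (nonneg_iff.mp this).2.symm
  exact eq_conj_or_im_eq_zero_of_im_sub_mul_sub_eq_zero (by simp) (him t (by omega))
    (him (t + 1) le_rfl)

end Complex

/-- Characterization of pairs `(z, z')` for which
`1/(Γ(z-k)Γ(z'-k))` is a nonnegative real number for every integer `k`. -/
theorem stmt_8 (z z' : ℂ) :
    (∀ k : ℤ, 0 ≤ ((Complex.Gamma (z - k) * Complex.Gamma (z' - k))⁻¹).re ∧
        ((Complex.Gamma (z - k) * Complex.Gamma (z' - k))⁻¹).im = 0) ↔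
      ((z' = starRingEnd ℂ z ∧ z.im ≠ 0) ∨
        (z.im = 0 ∧ z'.im = 0 ∧
          ∃ m : ℤ, (m : ℝ) < z.re ∧ z.re < m + 1 ∧ (m : ℝ) < z'.re ∧ z'.re < m + 1) ∨
        (∃ m : ℤ, (z = (m : ℂ) ∧ z'.im = 0 ∧ (m : ℝ) - 1 < z'.re) ∨
          (z' = (m : ℂ) ∧ z.im = 0 ∧ (m : ℝ) - 1 < z.re))) := by
  have hnonneg (w : ℂ) : 0 ≤ (w⁻¹).re ∧ (w⁻¹).im = 0 ↔ 0 ≤ w := by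
    rw [eq_comm, ← Complex.nonneg_iff, inv_nonneg]
  simp only [hnonneg]
  by_cases hreal : z.im = 0 ∧ z'.im = 0
  · obtain ⟨x, rfl⟩ : ∃ x : ℝ, (x : ℂ) = z := ⟨z.re, Complex.ext rfl hreal.1.symm⟩
    obtain ⟨y, rfl⟩ : ∃ y : ℝ, (y : ℂ) = z' := ⟨z'.re, Complex.ext rfl hreal.2.symm⟩
    rw [forall_congr' (Complex.Gamma_ofReal_sub_mul_nonneg_iff x y),
      Real.Gamma_sub_mul_Gamma_sub_nonneg_iff]
    simp [← Complex.ofReal_intCast, Complex.ofReal_inj]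
  · refine ⟨fun h ↦ ?_, ?_⟩
    · rcases Complex.eq_conj_or_im_eq_zero_of_Gamma_sub_mul_Gamma_sub_nonneg h with hconj | hreal'
      · exact Or.inl ⟨hconj, fun h0 ↦ hreal ⟨h0, by simp [hconj, h0]⟩⟩
      · exact absurd hreal' hreal
    · rintro (⟨rfl, -⟩ | ⟨h₁, h₂, -⟩ | ⟨m, ⟨rfl, h₂, -⟩ | ⟨rfl, h₁, -⟩⟩)
      · exact Complex.Gamma_sub_mul_Gamma_conj_sub_nonneg z
      all_goals exact absurd ⟨by simp [*], by simp [*]⟩ hreal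
end

section
/- Let A, B, C be complex with C not a nonpositive integer, and let D_N be a sequence of complex numbers, none a nonpositive integer, with −N/D_N → q ∈ (0,1) as N → ∞. Then the terminating hypergeometric sums ₃F₂[−N, A, B; C, D_N; 1] = Σ_{k=0}^N (−N)_k(A)_k(B)_k/(k!(C)_k(D_N)_k) converge as N → ∞ to the Gauss hypergeometric value ₂F₁[A, B; C; q] = Σ_{k≥0}(A)_k(B)_k q^k/(k!(C)_k). -/
/-!
The `k`-th term of `₃F₂[-N, A, B; C, D_N; 1]` is the `k`-th coefficient of `₂F₁[A, B; C; ·]`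
multiplied by `∏_{i<k} (i - N) / (D_N + i)`. Since `|D_N| → ∞`, each factor tends to `q`, so the
terms converge to those of `₂F₁[A, B; C; q]`; and once `N ≤ r |D_N|` for a fixed `r ∈ (q, 1)`,
each factor with `i < N` has modulus at most `r`. The terms are then dominated by those of the
absolutely convergent series `₂F₁[A, B; C; r]`, and Tannery's theorem gives the limit.
-/

/-- Pochhammer symbol `(x)_k = x(x+1)⋯(x+k-1)` for a complex number. -/
def poch (x : ℂ) (k : ℕ) : ℂ := ∏ i ∈ Finset.range k, (x + i)

open Filter Finset Topology

noncomputable def term2F1 (A B C z : ℂ) (k : ℕ) : ℂ :=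
  poch A k * poch B k * z ^ k / ((k.factorial : ℂ) * poch C k)

noncomputable def term3F2 (A B C D : ℂ) (N k : ℕ) : ℂ :=
  poch (-(N : ℂ)) k * poch A k * poch B k / ((k.factorial : ℂ) * poch C k * poch D k)

lemma poch_neg_natCast_eq_zero {N k : ℕ} (h : N < k) : poch (-(N : ℂ)) k = 0 :=
  prod_eq_zero (mem_range.2 h) (by simp)

lemma term3F2_eq_zero (A B C D : ℂ) {N k : ℕ} (h : N < k) :
    term3F2 A B C D N k = 0 := by
  simp [term3F2, poch_neg_natCast_eq_zero h]

lemma term2F1_eq_prod (A B C z : ℂ) (k : ℕ) :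
    term2F1 A B C z k = ∏ i ∈ range k, z * (A + i) * (B + i) / ((i + 1) * (C + i)) := by
  have hfact : (k.factorial : ℂ) = ∏ i ∈ range k, ((i : ℂ) + 1) := by
    rw [← prod_range_add_one_eq_factorial]
    push_cast
    rfl
  simp only [term2F1, poch, hfact, ← pow_card_mul_prod, card_range, prod_mul_distrib,
    prod_div_distrib]
  ring

lemma term2F1_eq_pow_mul (A B C z : ℂ) (k : ℕ) :
    term2F1 A B C z k = z ^ k * term2F1 A B C 1 k := by
  simp only [term2F1, one_pow]
  ring

lemma term3F2_eq_mul_term2F1 (A B C D : ℂ) (N k : ℕ) :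
    term3F2 A B C D N k = (poch (-(N : ℂ)) k / poch D k) * term2F1 A B C 1 k := by
  simp only [term3F2, term2F1, one_pow]
  ring

lemma summable_norm_prod_range_of_tendsto {𝕜 : Type*} [NormedField 𝕜] {t : ℕ → 𝕜} {z : 𝕜}
    (ht : Tendsto t atTop (𝓝 z)) (hz : ‖z‖ < 1) :
    Summable fun k => ‖∏ i ∈ range k, t i‖ := by
  obtain ⟨r, hzr, hr1⟩ := exists_between hz
  refine summable_of_ratio_norm_eventually_le hr1 ?_
  filter_upwards [ht.norm.eventually (gt_mem_nhds hzr)] with n hn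
  simp only [norm_norm, prod_range_succ, norm_mul]
  rw [mul_comm r]
  gcongr

lemma tendsto_add_div_add_natCast (a b : ℂ) :
    Tendsto (fun k : ℕ => (a + k) / (b + k)) atTop (𝓝 1) := by
  have h := (tendsto_natCast_div_add_atTop b).div (tendsto_natCast_div_add_atTop a) one_ne_zero
  rw [div_one] at h
  refine h.congr' ?_
  filter_upwards [eventually_ne_atTop 0] with k hk
  have hk : (k : ℂ) ≠ 0 := Nat.cast_ne_zero.2 hk
  simp only [Pi.div_apply]
  rw [div_div_div_cancel_left' _ _ hk, add_comm a, add_comm b]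

lemma summable_norm_term2F1 (A B C : ℂ) {z : ℂ} (hz : ‖z‖ < 1) :
    Summable fun k => ‖term2F1 A B C z k‖ := by
  have hratio : Tendsto (fun i : ℕ => z * ((A + i) / (1 + i)) * ((B + i) / (C + i)))
      atTop (𝓝 z) := by
    simpa using ((tendsto_add_div_add_natCast A 1).const_mul z).mul
      (tendsto_add_div_add_natCast B C)
  simp_rw [term2F1_eq_prod]
  refine (summable_norm_prod_range_of_tendsto hratio hz).congr fun k => ?_
  congr 1
  refine prod_congr rfl fun i _ => ?_
  rw [add_comm (1 : ℂ), mul_div_assoc' z, div_mul_div_comm]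

lemma tendsto_add_div_add_of_tendsto_div {x D : ℕ → ℂ} {q : ℂ}
    (hlim : Tendsto (fun N => x N / D N) atTop (𝓝 q))
    (hD : Tendsto (fun N => ‖D N‖) atTop atTop) (a b : ℂ) :
    Tendsto (fun N => (x N + a) / (D N + b)) atTop (𝓝 q) := by
  have hinv : Tendsto (fun N => (D N)⁻¹) atTop (𝓝 0) := by
    rw [tendsto_zero_iff_norm_tendsto_zero]
    simp only [norm_inv]
    exact hD.inv_tendsto_atTop
  have h := (hlim.add (hinv.const_mul a)).div ((hinv.const_mul b).const_add 1) (by simp)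
  rw [mul_zero, add_zero, mul_zero, add_zero, div_one] at h
  refine h.congr' ?_
  filter_upwards [hD.eventually_gt_atTop 0] with N hN
  have hN : D N ≠ 0 := norm_pos_iff.1 hN
  simp only [Pi.div_apply]
  field_simp

lemma tendsto_poch_neg_natCast_div_poch {D : ℕ → ℂ} {q : ℂ}
    (hlim : Tendsto (fun N : ℕ => -(N : ℂ) / D N) atTop (𝓝 q))
    (hD : Tendsto (fun N => ‖D N‖) atTop atTop) (k : ℕ) :
    Tendsto (fun N : ℕ => poch (-(N : ℂ)) k / poch (D N) k) atTop (𝓝 (q ^ k)) := by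
  simp only [poch, ← prod_div_distrib]
  simpa using tendsto_finsetProd (range k)
    fun i _ => tendsto_add_div_add_of_tendsto_div hlim hD (i : ℂ) (i : ℂ)

lemma norm_neg_natCast_add_div_add_le {N i : ℕ} {d : ℂ} {r : ℝ} (hi : i ≤ N)
    (hr0 : 0 ≤ r) (hr1 : r ≤ 1) (hN : (N : ℝ) ≤ r * ‖d‖) :
    ‖(-(N : ℂ) + i) / (d + i)‖ ≤ r := by
  rcases (norm_nonneg (d + i)).eq_or_lt with hd | hd
  · rw [norm_div, ← hd, div_zero]
    exact hr0
  have hnum : ‖-(N : ℂ) + i‖ = N - i := by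
    rw [show -(N : ℂ) + i = -((N - i : ℕ) : ℂ) by push_cast [Nat.cast_sub hi]; ring, norm_neg,
      Complex.norm_natCast, Nat.cast_sub hi]
  have hden : ‖d‖ - i ≤ ‖d + i‖ := by
    simpa using norm_sub_norm_le d (-(i : ℂ))
  have hi0 : (0 : ℝ) ≤ i := Nat.cast_nonneg i
  rw [norm_div, hnum, div_le_iff₀ hd]
  nlinarith

lemma norm_term3F2_le (A B C D : ℂ) {N : ℕ} {r : ℝ} (hr0 : 0 ≤ r) (hr1 : r ≤ 1)
    (hN : (N : ℝ) ≤ r * ‖D‖) (k : ℕ) :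
    ‖term3F2 A B C D N k‖ ≤ ‖term2F1 A B C r k‖ := by
  rcases lt_or_ge N k with hk | hk
  · rw [term3F2_eq_zero A B C D hk, norm_zero]
    exact norm_nonneg _
  rw [term3F2_eq_mul_term2F1, term2F1_eq_pow_mul A B C (r : ℂ), norm_mul, norm_mul, norm_pow,
    Complex.norm_real, Real.norm_of_nonneg hr0]
  gcongr
  simp only [poch, ← prod_div_distrib, norm_prod]
  calc ∏ i ∈ range k, ‖(-(N : ℂ) + i) / (D + i)‖ ≤ ∏ _i ∈ range k, r :=
        prod_le_prod (fun _ _ => norm_nonneg _) fun i hi =>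
          norm_neg_natCast_add_div_add_le ((mem_range.1 hi).le.trans hk) hr0 hr1 hN
    _ = r ^ k := by rw [prod_const, card_range]

lemma eventually_natCast_le_mul_norm {D : ℕ → ℂ} {q r : ℝ}
    (hlim : Tendsto (fun N : ℕ => -(N : ℂ) / D N) atTop (𝓝 (q : ℂ))) (hq : 0 < q) (hqr : q < r) :
    ∀ᶠ N : ℕ in atTop, (N : ℝ) ≤ r * ‖D N‖ := by
  have hn : Tendsto (fun N : ℕ => (N : ℝ) / ‖D N‖) atTop (𝓝 q) := by
    simpa [abs_of_pos hq] using hlim.norm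
  filter_upwards [hn.eventually (Ioo_mem_nhds hq hqr)] with N ⟨hpos, hlt⟩
  -- `N / 0 = 0`, so the positive quotient forces `D N ≠ 0`.
  have hD : 0 < ‖D N‖ := (norm_nonneg _).lt_of_ne fun h => by simp [← h] at hpos
  rw [div_lt_iff₀ hD] at hlt
  exact hlt.le

theorem stmt_11_general (A B C : ℂ)
    (D : ℕ → ℂ)
    (q : ℝ) (hq0 : 0 < q) (hq1 : q < 1)
    (hlim : Filter.Tendsto (fun N : ℕ => -(N : ℂ) / D N) Filter.atTop (nhds (q : ℂ))) :
    Filter.Tendsto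
      (fun N : ℕ => ∑ k ∈ Finset.range (N + 1),
        poch (-(N : ℂ)) k * poch A k * poch B k /
          ((k.factorial : ℂ) * poch C k * poch (D N) k))
      Filter.atTop
      (nhds (∑' k : ℕ, poch A k * poch B k * (q : ℂ) ^ k /
        ((k.factorial : ℂ) * poch C k))) := by
  obtain ⟨r, hqr, hr1⟩ := exists_between hq1
  have hr0 : 0 < r := hq0.trans hqr
  have hN := eventually_natCast_le_mul_norm hlim hq0 hqr
  have hDnorm : Tendsto (fun N => ‖D N‖) atTop atTop :=
    tendsto_atTop_mono' _ (hN.mono fun N h => (div_le_iff₀' hr0).2 h)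
      (tendsto_natCast_atTop_atTop.atTop_div_const hr0)
  have hterm : ∀ k, Tendsto (fun N => term3F2 A B C (D N) N k) atTop
      (𝓝 (term2F1 A B C q k)) := fun k => by
    simp only [term3F2_eq_mul_term2F1, term2F1_eq_pow_mul A B C q]
    exact (tendsto_poch_neg_natCast_div_poch hlim hDnorm k).mul_const _
  have hsum := summable_norm_term2F1 A B C (z := r) (by simpa [abs_of_pos hr0])
  refine (tendsto_tsum_of_dominated_convergence hsum hterm
    (hN.mono fun N h => norm_term3F2_le A B C (D N) hr0.le hr1.le h)).congr fun N => ?_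
  exact tsum_eq_sum fun k hk => term3F2_eq_zero A B C (D N) (by simpa using hk)

/-- If `-N/D_N → q ∈ (0,1)`, the terminating sums
`₃F₂[-N, A, B; C, D_N; 1]` converge to `₂F₁[A, B; C; q]` as `N → ∞`. -/
theorem stmt_11 (A B C : ℂ) (hC : ∀ n : ℕ, C ≠ -(n : ℂ))
    (D : ℕ → ℂ) (hD : ∀ N : ℕ, ∀ n : ℕ, D N ≠ -(n : ℂ))
    (q : ℝ) (hq0 : 0 < q) (hq1 : q < 1)
    (hlim : Filter.Tendsto (fun N : ℕ => -(N : ℂ) / D N) Filter.atTop (nhds (q : ℂ))) :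
    Filter.Tendsto
      (fun N : ℕ => ∑ k ∈ Finset.range (N + 1),
        poch (-(N : ℂ)) k * poch A k * poch B k /
          ((k.factorial : ℂ) * poch C k * poch (D N) k))
      Filter.atTop
      (nhds (∑' k : ℕ, poch A k * poch B k * (q : ℂ) ^ k /
        ((k.factorial : ℂ) * poch C k))) :=
  stmt_11_general A B C D q hq0 hq1 hlim
end

section
/- Let A, B, C, δ be complex, C not a nonpositive integer, and let D_N be complex numbers with D_N/N → q ∈ (0,1) as N → ∞ (uniformly bounded away from 1). Then ₃F₂[A, B, D_N; N+δ, C; 1] = Σ_{k≥0} (A)_k(B)_k(D_N)_k/(k!(N+δ)_k(C)_k) converges, for N large, and tends to ₂F₁[A, B; C; q] as N → ∞. -/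
open Filter Finset Topology

lemma prod_range_div_shift_eq {x : ℝ} (hx : 0 < x) (k s : ℕ) :
    ∏ i ∈ range k, (x + i) / (x + s + i) = ∏ j ∈ range s, (x + j) / (x + k + j) := by
  have key : (∏ i ∈ range k, (x + i)) * ∏ j ∈ range s, (x + k + j)
      = (∏ j ∈ range s, (x + j)) * ∏ i ∈ range k, (x + s + i) := by
    simp only [add_assoc, ← Nat.cast_add, ← prod_range_add, add_comm k s]
  rw [prod_div_distrib, prod_div_distrib, div_eq_div_iff (by positivity) (by positivity)]
  linear_combination key

lemma prod_range_div_shift_le {x : ℝ} (hx : 1 ≤ x) (k s : ℕ) :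
    ∏ i ∈ range k, (x + i) / (x + s + i) ≤ ((x + s) / (k + 1)) ^ s := by
  rw [prod_range_div_shift_eq (by linarith)]
  refine (prod_le_prod (fun j _ => by positivity) fun j hj => ?_).trans_eq
    (by rw [prod_const, card_range])
  have hjs : (j : ℝ) ≤ s := by exact_mod_cast (mem_range.1 hj).le
  exact div_le_div₀ (by positivity) (by linarith) (by positivity) (by linarith)

lemma add_div_add_le_add_div_add_add {p y x s i : ℝ} (hs : 0 ≤ s) (hi : 0 ≤ i) (hx : 0 < x)
    (hy : 0 < y) (h₁ : s ≤ y - p) (h₂ : s * y ≤ x * (y - p)) :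
    (p + i) / (y + i) ≤ (x + i) / (x + s + i) := by
  rw [div_le_div_iff₀ (by positivity) (by positivity)]
  nlinarith [mul_nonneg hs (hs.trans h₁), mul_nonneg hi (sub_nonneg.2 h₁)]

lemma exists_prod_le_mul_pow {ρ : ℕ → ℝ} {m : ℕ} (hρ : ∀ i, 0 ≤ ρ i)
    (h : ∀ᶠ i in atTop, ρ i ≤ 1 + m / (i + 1)) :
    ∃ M, ∀ k, ∏ i ∈ range k, ρ i ≤ M * (k + 1) ^ m := by
  set w : ℕ → ℝ := fun k => (∏ i ∈ range k, ρ i) / (k + 1) ^ m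
  have hstep : ∀ᶠ k in atTop, w (k + 1) ≤ w k := by
    filter_upwards [h] with k hk
    have hpos : (0 : ℝ) < k + 1 := by positivity
    have hbern : ρ k * (k + 1) ^ m ≤ (k + 1 + 1) ^ m := by
      have := one_add_mul_le_pow (a := 1 / ((k : ℝ) + 1)) (by linarith [one_div_pos.2 hpos]) m
      calc ρ k * (k + 1) ^ m ≤ (1 + m * (1 / (k + 1))) * (k + 1) ^ m := by
            gcongr; rwa [mul_one_div]
        _ ≤ (1 + 1 / (k + 1)) ^ m * (k + 1) ^ m := by gcongr
        _ = (k + 1 + 1) ^ m := by rw [← mul_pow]; field_simp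
    simp only [w, prod_range_succ, Nat.cast_add, Nat.cast_one]
    rw [div_le_div_iff₀ (by positivity) (by positivity)]
    calc (∏ i ∈ range k, ρ i) * ρ k * (k + 1) ^ m
        = (∏ i ∈ range k, ρ i) * (ρ k * (k + 1) ^ m) := by ring
      _ ≤ (∏ i ∈ range k, ρ i) * (k + 1 + 1) ^ m := by
          gcongr; exact prod_nonneg fun i _ => hρ i
  obtain ⟨k₀, hk₀⟩ := eventually_atTop.1 hstep
  have hle : ∀ k ≥ k₀, w k ≤ w k₀ := fun k hk => by
    induction k, hk using Nat.le_induction with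
    | base => rfl
    | succ k hk ih => exact (hk₀ k hk).trans ih
  obtain ⟨M, hM⟩ := (isBoundedUnder_of_eventually_le (eventually_atTop.2 ⟨k₀, hle⟩)).bddAbove_range
  exact ⟨M, fun k => (div_le_iff₀ (by positivity)).1 (hM ⟨k, rfl⟩)⟩

lemma tendsto_poch_div_pow {z : ℕ → ℂ} {w : ℂ}
    (hz : Tendsto (fun N : ℕ => z N / N) atTop (𝓝 w)) (k : ℕ) :
    Tendsto (fun N : ℕ => poch (z N) k / (N : ℂ) ^ k) atTop (𝓝 (w ^ k)) := by
  have hfac : ∀ i : ℕ, Tendsto (fun N : ℕ => z N / N + i / N) atTop (𝓝 w) := fun i => by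
    simpa using hz.add (tendsto_const_div_atTop_nhds_zero_nat (i : ℂ))
  have := tendsto_finsetProd (range k) fun i _ => hfac i
  simpa only [poch, prod_const, card_range, ← add_div, prod_div_distrib] using this

lemma tendsto_poch_div_poch {z : ℕ → ℂ} {w : ℂ}
    (hz : Tendsto (fun N : ℕ => z N / N) atTop (𝓝 w)) (δ : ℂ) (k : ℕ) :
    Tendsto (fun N : ℕ => poch (z N) k / poch (N + δ) k) atTop (𝓝 (w ^ k)) := by
  have hδ : Tendsto (fun N : ℕ => ((N : ℂ) + δ) / N) atTop (𝓝 1) := by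
    have := (tendsto_const_div_atTop_nhds_zero_nat δ).const_add 1
    rw [add_zero] at this
    refine this.congr' ?_
    filter_upwards [eventually_ne_atTop 0] with N hN
    rw [add_div, div_self (Nat.cast_ne_zero.2 hN)]
  have := (tendsto_poch_div_pow hz k).div (tendsto_poch_div_pow hδ k) (by simp)
  rw [one_pow, div_one] at this
  refine this.congr' ?_
  filter_upwards [eventually_ne_atTop 0] with N hN
  exact div_div_div_cancel_right₀ (pow_ne_zero _ (Nat.cast_ne_zero.2 hN)) _ _

lemma norm_poch (z : ℂ) (k : ℕ) : ‖poch z k‖ = ∏ i ∈ range k, ‖z + i‖ := norm_prod _ _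

lemma norm_poch_mul_poch_div_eq_prod (A B C : ℂ) (k : ℕ) :
    ‖poch A k * poch B k / (k.factorial * poch C k)‖
      = ∏ i ∈ range k, ‖A + i‖ * ‖B + i‖ / ((i + 1) * ‖C + i‖) := by
  rw [← prod_range_add_one_eq_factorial]
  push_cast
  simp only [norm_div, norm_mul, norm_poch, norm_prod, ← prod_mul_distrib, ← prod_div_distrib]
  norm_cast

lemma sub_le_norm_add_natCast (C : ℂ) (i : ℕ) : i - ‖C‖ ≤ ‖C + i‖ := by
  simpa [add_comm] using norm_sub_norm_le (i : ℂ) (-C)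

lemma exists_norm_poch_mul_poch_div_le (A B C : ℂ) :
    ∃ M : ℝ, ∃ m : ℕ, ∀ k : ℕ,
      ‖poch A k * poch B k / (k.factorial * poch C k)‖ ≤ M * (k + 1) ^ m := by
  set m := ⌈‖A‖ + ‖B‖ + ‖C‖⌉₊
  have hm : ‖A‖ + ‖B‖ + ‖C‖ ≤ m := Nat.le_ceil _
  have hev : ∀ᶠ i : ℕ in atTop, ‖C‖ * (m + 1) + ‖A‖ * ‖B‖ + 1 ≤ (i : ℝ) :=
    tendsto_natCast_atTop_atTop.eventually_ge_atTop _
  have hρ : ∀ᶠ i : ℕ in atTop,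
      ‖A + i‖ * ‖B + i‖ / ((i + 1) * ‖C + i‖) ≤ 1 + m / ((i : ℝ) + 1) := by
    filter_upwards [hev] with i hi
    have hA : ‖A + i‖ ≤ ‖A‖ + i := by simpa using norm_add_le A (i : ℂ)
    have hB : ‖B + i‖ ≤ ‖B‖ + i := by simpa using norm_add_le B (i : ℂ)
    have hC := sub_le_norm_add_natCast C i
    have hpos : (0 : ℝ) < (i + 1) * ‖C + i‖ := by
      have : 0 ≤ ‖C‖ * (m + 1) := by positivity
      have : 0 ≤ ‖A‖ * ‖B‖ := by positivity
      exact mul_pos (by positivity) (by nlinarith)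
    rw [div_le_iff₀ hpos]
    calc ‖A + i‖ * ‖B + i‖ ≤ (‖A‖ + i) * (‖B‖ + i) := by gcongr
      _ ≤ (i + 1 + m) * (i - ‖C‖) := by
          nlinarith [mul_nonneg (Nat.cast_nonneg i : (0 : ℝ) ≤ i) (sub_nonneg.2 hm)]
      _ ≤ (i + 1 + m) * ‖C + i‖ := by gcongr
      _ = (1 + m / (i + 1)) * ((i + 1) * ‖C + i‖) := by field_simp
  obtain ⟨M, hM⟩ := exists_prod_le_mul_pow (fun i => by positivity) hρ
  exact ⟨M, m, fun k => (norm_poch_mul_poch_div_eq_prod A B C k).trans_le (hM k)⟩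

lemma exists_norm_poch_div_poch_le {z : ℕ → ℂ} {w : ℂ}
    (hz : Tendsto (fun N : ℕ => z N / N) atTop (𝓝 w)) (hw : ‖w‖ < 1) (δ : ℂ) (s : ℕ) :
    ∃ K : ℝ, ∀ᶠ N : ℕ in atTop, ∀ k : ℕ, ‖poch (z N) k / poch (N + δ) k‖ ≤ K / (k + 1) ^ s := by
  set θ : ℝ := (1 - ‖w‖) / 4
  have hθ : 0 < θ := by simp only [θ]; linarith
  set x : ℝ := s / θ + 1
  have hxθ : x * θ = s + θ := by simp only [x]; field_simp
  have hz' : ∀ᶠ N : ℕ in atTop, ‖z N‖ ≤ (1 - 2 * θ) * N := by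
    have hlt : ‖w‖ < 1 - 2 * θ := by simp only [θ]; linarith
    filter_upwards [hz.norm.eventually_lt_const hlt, eventually_ne_atTop 0] with N hN hN0
    rw [norm_div, Complex.norm_natCast, div_lt_iff₀ (by positivity)] at hN
    exact hN.le
  have hN : ∀ᶠ N : ℕ in atTop, ‖δ‖ + s + 1 ≤ θ * N :=
    (tendsto_natCast_atTop_atTop.const_mul_atTop hθ).eventually_ge_atTop _
  refine ⟨(x + s) ^ s, ?_⟩
  filter_upwards [hz', hN] with N hz' hN k
  have hgap : θ * N ≤ N - ‖δ‖ - ‖z N‖ := by linarith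
  have hs : (0 : ℝ) ≤ s := s.cast_nonneg
  have hx : 1 ≤ x := le_add_of_nonneg_left (div_nonneg hs hθ.le)
  have hy : 0 < N - ‖δ‖ := by linarith [norm_nonneg (z N)]
  calc ‖poch (z N) k / poch (N + δ) k‖ = ∏ i ∈ range k, ‖z N + i‖ / ‖N + δ + i‖ := by
        rw [norm_div, norm_poch, norm_poch, prod_div_distrib]
    _ ≤ ∏ i ∈ range k, (‖z N‖ + i) / (N - ‖δ‖ + i) := by
        refine prod_le_prod (fun i _ => by positivity) fun i _ => ?_
        refine div_le_div₀ (by positivity) (by simpa using norm_add_le (z N) i) (by positivity) ?_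
        have := sub_le_norm_add_natCast δ (N + i)
        push_cast at this
        rw [show (N : ℂ) + δ + i = δ + (N + i) by ring]
        linarith
    _ ≤ ∏ i ∈ range k, (x + i) / (x + s + i) := by
        refine prod_le_prod (fun i _ => by positivity) fun i _ =>
          add_div_add_le_add_div_add_add hs i.cast_nonneg (by positivity) hy
            (by linarith [norm_nonneg δ]) ?_
        nlinarith [norm_nonneg δ]
    _ ≤ ((x + s) / (k + 1)) ^ s := prod_range_div_shift_le hx k s
    _ = (x + s) ^ s / (k + 1) ^ s := div_pow _ _ _

theorem stmt_12_general (A B C δ : ℂ)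
    (D : ℕ → ℂ) (q : ℝ) (hq0 : 0 < q) (hq1 : q < 1)
    (hlim : Filter.Tendsto (fun N : ℕ => D N / (N : ℂ)) Filter.atTop (nhds (q : ℂ))) :
    (∀ᶠ N : ℕ in Filter.atTop,
      Summable (fun k : ℕ => poch A k * poch B k * poch (D N) k /
        ((k.factorial : ℂ) * poch ((N : ℂ) + δ) k * poch C k))) ∧
    Filter.Tendsto
      (fun N : ℕ => ∑' k : ℕ, poch A k * poch B k * poch (D N) k /
        ((k.factorial : ℂ) * poch ((N : ℂ) + δ) k * poch C k))
      Filter.atTop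
      (nhds (∑' k : ℕ, poch A k * poch B k * (q : ℂ) ^ k /
        ((k.factorial : ℂ) * poch C k))) := by
  have hsplit : ∀ N k : ℕ, poch A k * poch B k * poch (D N) k /
      (k.factorial * poch (N + δ) k * poch C k)
      = poch A k * poch B k / (k.factorial * poch C k) * (poch (D N) k / poch (N + δ) k) :=
    fun N k => by rw [div_mul_div_comm, mul_right_comm (k.factorial : ℂ)]
  obtain ⟨M, m, hM⟩ := exists_norm_poch_mul_poch_div_le A B C
  obtain ⟨K, hK⟩ := exists_norm_poch_div_poch_le hlim
    (by rwa [Complex.norm_real, Real.norm_of_nonneg hq0.le]) δ (m + 2)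
  have hsum : Summable fun k : ℕ => M * K / ((k : ℝ) + 1) ^ 2 := by
    simpa [div_eq_mul_inv] using
      ((summable_nat_add_iff 1).2 (Real.summable_nat_pow_inv.2 one_lt_two)).mul_left (M * K)
  have hdom : ∀ᶠ N : ℕ in atTop, ∀ k, ‖poch A k * poch B k * poch (D N) k /
      (k.factorial * poch (N + δ) k * poch C k)‖ ≤ M * K / ((k : ℝ) + 1) ^ 2 := by
    filter_upwards [hK] with N hN k
    rw [hsplit, norm_mul]
    calc _ ≤ M * (k + 1) ^ m * (K / (k + 1) ^ (m + 2)) :=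
          mul_le_mul (hM k) (hN k) (norm_nonneg _) ((norm_nonneg _).trans (hM k))
      _ = M * K / ((k : ℝ) + 1) ^ 2 := by field_simp; ring
  refine ⟨hdom.mono fun N h => hsum.of_norm_bounded h, ?_⟩
  refine tendsto_tsum_of_dominated_convergence hsum (fun k => ?_) hdom
  simp only [hsplit, mul_div_right_comm _ ((q : ℂ) ^ k)]
  exact (tendsto_poch_div_poch hlim δ k).const_mul _

/-- If `D_N/N → q ∈ (0,1)`, the series
`₃F₂[A, B, D_N; N+δ, C; 1]` converge for large `N` and tend to `₂F₁[A, B; C; q]`. -/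
theorem stmt_12 (A B C δ : ℂ) (hC : ∀ n : ℕ, C ≠ -(n : ℂ))
    (D : ℕ → ℂ) (q : ℝ) (hq0 : 0 < q) (hq1 : q < 1)
    (hlim : Filter.Tendsto (fun N : ℕ => D N / (N : ℂ)) Filter.atTop (nhds (q : ℂ))) :
    (∀ᶠ N : ℕ in Filter.atTop,
      Summable (fun k : ℕ => poch A k * poch B k * poch (D N) k /
        ((k.factorial : ℂ) * poch ((N : ℂ) + δ) k * poch C k))) ∧
    Filter.Tendsto
      (fun N : ℕ => ∑' k : ℕ, poch A k * poch B k * poch (D N) k /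
        ((k.factorial : ℂ) * poch ((N : ℂ) + δ) k * poch C k))
      Filter.atTop
      (nhds (∑' k : ℕ, poch A k * poch B k * (q : ℂ) ^ k /
        ((k.factorial : ℂ) * poch C k))) :=
  stmt_12_general A B C δ D q hq0 hq1 hlim
end

section
/- For all real y, z, z', w, w' (avoiding the poles), the following trigonometric identity holds: sin(πy)·sin(π(z+w))·sin(π(z'+w))·sin(π(z+w'))·sin(π(z'+w')) / (sin(π(y−z))·sin(π(y−z'))·sin(π(y+w))·sin(π(y+w'))) = sin(π(z'+w))sin(π(z'+w'))sin(πz)/(sin(π(z−z'))sin(π(y−z))) + sin(π(z+w))sin(π(z+w'))sin(πz')/(sin(π(z'−z))sin(π(y−z'))) + sin(π(z+w'))sin(π(z'+w'))sin(πw)/(sin(π(w−w'))sin(π(y+w))) + sin(π(z+w))sin(π(z'+w))sin(πw')/(sin(π(w'−w))sin(π(y+w'))). -/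
/-!
Writing `sin θ = (x - x⁻¹) / (2i)` with `x = exp (iθ)` turns the identity into an identity
between rational functions of the exponentials of `y, z, z', w, w'`, checked by clearing
denominators. Conceptually it is the partial fraction expansion of the left-hand side in `y`:
both sides are antiperiodic in `y`, have simple poles at `z, z', -w, -w'` with the same
residues, and vanish as `|Im y| → ∞`.
-/

open Real

theorem partial_fractions_of_eq_sub_inv_div {K : Type*} [Field K] (f : K → K) (k : K)
    (hf : ∀ x, f x = (x - x⁻¹) / k) (a b c d e : K) (ha : a ≠ 0) (hb : b ≠ 0) (hc : c ≠ 0)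
    (hd : d ≠ 0) (he : e ≠ 0)
    (h1 : f (a / b) ≠ 0) (h2 : f (a / c) ≠ 0) (h3 : f (a * d) ≠ 0) (h4 : f (a * e) ≠ 0)
    (h5 : f (b / c) ≠ 0) (h6 : f (d / e) ≠ 0) :
    f a * f (b * d) * f (c * d) * f (b * e) * f (c * e) /
        (f (a / b) * f (a / c) * f (a * d) * f (a * e))
      = f (c * d) * f (c * e) * f b / (f (b / c) * f (a / b))
        + f (b * d) * f (b * e) * f c / (f (c / b) * f (a / c))
        + f (b * e) * f (c * e) * f d / (f (d / e) * f (a * d))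
        + f (b * d) * f (c * d) * f e / (f (e / d) * f (a * e)) := by
  simp only [hf, div_ne_zero_iff] at h1 h2 h3 h4 h5 h6
  field_simp at h1 h2 h3 h4 h5 h6
  simp only [div_ne_zero_iff] at h1 h2 h3 h4 h5 h6
  obtain ⟨⟨hab, -⟩, hk⟩ := h1
  obtain ⟨⟨hac, -⟩, -⟩ := h2
  obtain ⟨⟨had, -⟩, -⟩ := h3
  obtain ⟨⟨hae, -⟩, -⟩ := h4
  obtain ⟨⟨hbc, -⟩, -⟩ := h5
  obtain ⟨⟨hde, -⟩, -⟩ := h6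
  have hcb : c ^ 2 - b ^ 2 ≠ 0 := fun h => hbc (by linear_combination -h)
  have hed : e ^ 2 - d ^ 2 ≠ 0 := fun h => hde (by linear_combination -h)
  simp only [hf]
  field_simp
  ring

namespace Complex

theorem sin_eq_laurent_exp (u : ℂ) :
    sin u = (exp (u * I) - (exp (u * I))⁻¹) / (2 * I) := by
  rw [eq_div_iff (by simp), ← exp_neg, ← neg_mul]
  linear_combination I * two_sin u + (exp (-u * I) - exp (u * I)) * I_sq

theorem sin_partial_fractions (y z z' w w' : ℂ)
    (h1 : sin (y - z) ≠ 0) (h2 : sin (y - z') ≠ 0) (h3 : sin (y + w) ≠ 0)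
    (h4 : sin (y + w') ≠ 0) (h5 : sin (z - z') ≠ 0) (h6 : sin (w - w') ≠ 0) :
    sin y * sin (z + w) * sin (z' + w) * sin (z + w') * sin (z' + w') /
        (sin (y - z) * sin (y - z') * sin (y + w) * sin (y + w'))
      = sin (z' + w) * sin (z' + w') * sin z / (sin (z - z') * sin (y - z))
        + sin (z + w) * sin (z + w') * sin z' / (sin (z' - z) * sin (y - z'))
        + sin (z + w') * sin (z' + w') * sin w / (sin (w - w') * sin (y + w))
        + sin (z + w) * sin (z' + w) * sin w' / (sin (w' - w) * sin (y + w')) := by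
  -- an opaque `f`, so that `simp` rewrites `sin` through `hsin` without unfolding it
  obtain ⟨f, hf⟩ : ∃ f : ℂ → ℂ, ∀ x, f x = (x - x⁻¹) / (2 * I) := ⟨_, fun _ => rfl⟩
  have hsin : ∀ u, sin u = f (exp (u * I)) := fun u => by rw [hf, sin_eq_laurent_exp]
  simp only [hsin, add_mul, sub_mul, exp_add, exp_sub] at h1 h2 h3 h4 h5 h6 ⊢
  exact partial_fractions_of_eq_sub_inv_div f _ hf _ _ _ _ _ (exp_ne_zero _) (exp_ne_zero _)
    (exp_ne_zero _) (exp_ne_zero _) (exp_ne_zero _) h1 h2 h3 h4 h5 h6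

end Complex

theorem Real.sin_partial_fractions (y z z' w w' : ℝ)
    (h1 : sin (y - z) ≠ 0) (h2 : sin (y - z') ≠ 0) (h3 : sin (y + w) ≠ 0)
    (h4 : sin (y + w') ≠ 0) (h5 : sin (z - z') ≠ 0) (h6 : sin (w - w') ≠ 0) :
    sin y * sin (z + w) * sin (z' + w) * sin (z + w') * sin (z' + w') /
        (sin (y - z) * sin (y - z') * sin (y + w) * sin (y + w'))
      = sin (z' + w) * sin (z' + w') * sin z / (sin (z - z') * sin (y - z))
        + sin (z + w) * sin (z + w') * sin z' / (sin (z' - z) * sin (y - z'))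
        + sin (z + w') * sin (z' + w') * sin w / (sin (w - w') * sin (y + w))
        + sin (z + w) * sin (z' + w) * sin w' / (sin (w' - w) * sin (y + w')) := by
  exact_mod_cast Complex.sin_partial_fractions y z z' w w' (by exact_mod_cast h1)
    (by exact_mod_cast h2) (by exact_mod_cast h3) (by exact_mod_cast h4) (by exact_mod_cast h5)
    (by exact_mod_cast h6)

/-- The trigonometric identity used in the proof of Lemma 8.4. -/
theorem stmt_13 (y z z' w w' : ℝ)
    (h1 : Real.sin (π * (y - z)) ≠ 0) (h2 : Real.sin (π * (y - z')) ≠ 0)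
    (h3 : Real.sin (π * (y + w)) ≠ 0) (h4 : Real.sin (π * (y + w')) ≠ 0)
    (h5 : Real.sin (π * (z - z')) ≠ 0) (h6 : Real.sin (π * (w - w')) ≠ 0) :
    Real.sin (π * y) * Real.sin (π * (z + w)) * Real.sin (π * (z' + w)) *
        Real.sin (π * (z + w')) * Real.sin (π * (z' + w')) /
      (Real.sin (π * (y - z)) * Real.sin (π * (y - z')) *
        Real.sin (π * (y + w)) * Real.sin (π * (y + w')))
    = Real.sin (π * (z' + w)) * Real.sin (π * (z' + w')) * Real.sin (π * z) /
        (Real.sin (π * (z - z')) * Real.sin (π * (y - z)))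
      + Real.sin (π * (z + w)) * Real.sin (π * (z + w')) * Real.sin (π * z') /
        (Real.sin (π * (z' - z)) * Real.sin (π * (y - z')))
      + Real.sin (π * (z + w')) * Real.sin (π * (z' + w')) * Real.sin (π * w) /
        (Real.sin (π * (w - w')) * Real.sin (π * (y + w)))
      + Real.sin (π * (z + w)) * Real.sin (π * (z' + w)) * Real.sin (π * w') /
        (Real.sin (π * (w' - w)) * Real.sin (π * (y + w'))) := by
  simp only [mul_add, mul_sub] at h1 h2 h3 h4 h5 h6 ⊢
  exact Real.sin_partial_fractions _ _ _ _ _ h1 h2 h3 h4 h5 h6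
end

section
/- Complementation principle for determinantal processes on a finite set: Let E be a finite set, Z ⊆ E, and let P be a probability measure on subsets of E whose correlation functions are given by ρ(Y) = det[K(y_i,y_j)] for a kernel K on E × E. Define the involution X ↦ X Δ Z = (X ∩ (E\Z)) ∪ (Z \ X), and let P^Δ be the pushforward of P. Then P^Δ is determinantal with kernel K^Δ given by K^Δ(x,y) = K(x,y) if x ∉ Z and K^Δ(x,y) = δ_{xy} − K(x,y) if x ∈ Z. -/
/-!
Write `K^B` for `K` with the rows indexed by `B` replaced by those of `1 - K`. For disjoint `A`,
`B`, the weight of `{X | A ⊆ X, X ∩ B = ∅}` is the principal minor of `K^B` on `A ∪ B`. This is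
proved by induction on `B`: adding `b` to `B` splits the event according to whether `b ∈ X`,
which matches splitting row `b` of `1 - K` into a row of the identity (whose minor just drops
`b`) and a row of `K`. The theorem is the case `A = Y \ Z`, `B = Y ∩ Z`, because `Y ⊆ X ∆ Z`
iff `X` contains `Y \ Z` and avoids `Y ∩ Z`.
-/

open Finset Matrix
open scoped symmDiff

section

variable {E R : Type*} [DecidableEq E] [CommRing R]

namespace Matrix

def principalMinor (M : Matrix E E R) (Y : Finset E) : R :=
  (M.submatrix ((↑) : Y → E) ((↑) : Y → E)).det

/-- The kernel `K^Δ` of the complementation principle. -/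
def symmDiffKernel (K : Matrix E E R) (Z : Finset E) : Matrix E E R :=
  of fun x y => if x ∈ Z then (if x = y then 1 else 0) - K x y else K x y

theorem symmDiffKernel_empty (K : Matrix E E R) : symmDiffKernel K ∅ = K := by
  ext x y
  simp [symmDiffKernel]

theorem det_updateRow_sub {n : Type*} [Fintype n] [DecidableEq n] (M : Matrix n n R) (j : n)
    (u v : n → R) :
    det (updateRow M j (u - v)) = det (updateRow M j u) - det (updateRow M j v) :=
  (detRowAlternating : (n → R) [⋀^n]→ₗ[R] R).map_update_sub M j u v

theorem principalMinor_congr {M N : Matrix E E R} {Y : Finset E}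
    (h : ∀ x ∈ Y, ∀ y ∈ Y, M x y = N x y) : principalMinor M Y = principalMinor N Y := by
  unfold principalMinor
  congr 1
  ext x y
  exact h x x.2 y y.2

theorem principalMinor_updateRow_sub (M : Matrix E E R) {Y : Finset E} {b : E} (hb : b ∈ Y)
    (u v : E → R) :
    principalMinor (M.updateRow b (u - v)) Y =
      principalMinor (M.updateRow b u) Y - principalMinor (M.updateRow b v) Y := by
  have hsub : ∀ w : E → R, (M.updateRow b w).submatrix ((↑) : Y → E) ((↑) : Y → E) =
      (M.submatrix ((↑) : Y → E) ((↑) : Y → E)).updateRow ⟨b, hb⟩ (fun y => w y) := by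
    intro w
    ext x y
    by_cases hx : (x : E) = b <;> simp [updateRow_apply, hx, Subtype.ext_iff]
  rw [principalMinor, principalMinor, principalMinor, hsub, hsub, hsub]
  exact det_updateRow_sub (M.submatrix ((↑) : Y → E) ((↑) : Y → E)) ⟨b, hb⟩ _ _

theorem principalMinor_eq_of_subset_of_rows_eq_one (M : Matrix E E R) {S Y : Finset E}
    (hSY : S ⊆ Y) (hrow : ∀ x ∈ Y, x ∉ S → ∀ y ∈ Y, M x y = if x = y then 1 else 0) :
    principalMinor M Y = principalMinor M S := by
  unfold principalMinor
  -- block triangular for the partition `S`, `Y \ S`, with an identity block on `Y \ S`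
  rw [twoBlockTriangular_det _ (fun x : Y => (x : E) ∈ S)]
  · have hone : toSquareBlockProp (M.submatrix ((↑) : Y → E) ((↑) : Y → E))
        (fun x : Y => (x : E) ∉ S) = 1 := by
      ext x y
      rw [toSquareBlockProp_def, of_apply, submatrix_apply, hrow x x.1.2 x.2 y y.1.2, one_apply]
      simp only [Subtype.ext_iff]
    rw [hone, det_one, mul_one]
    exact det_submatrix_equiv_self (Equiv.subtypeSubtypeEquivSubtype fun hx => hSY hx)
      (M.submatrix ((↑) : S → E) ((↑) : S → E))
  · intro x hx y hy
    rw [submatrix_apply, hrow x x.2 hx y y.2]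
    exact if_neg fun hxy : (x : E) = y => hx (hxy ▸ hy)

end Matrix

theorem Finset.subset_symmDiff_iff (X Y Z : Finset E) :
    Y ⊆ X ∆ Z ↔ Y \ Z ⊆ X ∧ Disjoint (Y ∩ Z) X := by
  simp only [subset_iff, disjoint_left, mem_sdiff, mem_inter, mem_symmDiff]
  grind

variable [Fintype E]

def IsDeterminantal (P : Finset E → R) (K : Matrix E E R) : Prop :=
  ∀ Y : Finset E, ∑ X with Y ⊆ X, P X = principalMinor K Y

theorem Finset.sum_subset_disjoint_insert {M : Type*} [AddCommGroup M] (f : Finset E → M)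
    (A B : Finset E) (b : E) :
    ∑ X with A ⊆ X ∧ Disjoint (insert b B) X, f X =
      ∑ X with A ⊆ X ∧ Disjoint B X, f X - ∑ X with insert b A ⊆ X ∧ Disjoint B X, f X := by
  simp only [sum_filter, ← sum_sub_distrib]
  refine sum_congr rfl fun X _ => ?_
  by_cases hb : b ∈ X <;> simp [disjoint_insert_left, insert_subset_iff, hb]

theorem IsDeterminantal.sum_subset_disjoint {P : Finset E → R} {K : Matrix E E R}
    (hP : IsDeterminantal P K) {A B : Finset E} (hAB : Disjoint A B) :
    ∑ X with A ⊆ X ∧ Disjoint B X, P X = principalMinor (symmDiffKernel K B) (A ∪ B) := by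
  induction B using Finset.induction_on generalizing A with
  | empty => simpa [symmDiffKernel_empty] using hP A
  | @insert b B hbB ih =>
    have hbA : b ∉ A := fun hb => disjoint_left.mp hAB hb (mem_insert_self b B)
    have hAB' : Disjoint A B := disjoint_of_subset_right (subset_insert b B) hAB
    have hKb : symmDiffKernel K B b = K b := funext fun y => by simp [symmDiffKernel, hbB]
    have hsplit : symmDiffKernel K (insert b B) =
        (symmDiffKernel K B).updateRow b ((fun y => if b = y then 1 else 0) - K b) := by
      ext x y
      by_cases hx : x = b <;> simp [symmDiffKernel, updateRow_apply, hx]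
    rw [sum_subset_disjoint_insert, ih hAB', ih (disjoint_insert_left.mpr ⟨hbB, hAB'⟩), hsplit,
      union_insert, insert_union,
      principalMinor_updateRow_sub _ (mem_insert_self b _), ← hKb, updateRow_eq_self]
    congr 1
    rw [principalMinor_eq_of_subset_of_rows_eq_one _ (subset_insert b _)]
    · exact principalMinor_congr fun x hx y _ => by
        rw [updateRow_ne (ne_of_mem_of_not_mem hx (by simp [hbA, hbB]))]
    · intro x hx hxAB y _
      obtain rfl : x = b := by simpa [hxAB] using hx
      simp

theorem IsDeterminantal.symmDiff {P : Finset E → R} {K : Matrix E E R}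
    (hP : IsDeterminantal P K) (Z : Finset E) :
    IsDeterminantal (fun X => P (X ∆ Z)) (symmDiffKernel K Z) := by
  intro Y
  calc ∑ X with Y ⊆ X, P (X ∆ Z)
      = ∑ X with Y \ Z ⊆ X ∧ Disjoint (Y ∩ Z) X, P X :=
        (sum_equiv (symmDiff_left_involutive Z).toPerm (fun X => by simp [subset_symmDiff_iff])
          fun X _ => by simp).symm
    _ = principalMinor (symmDiffKernel K (Y ∩ Z)) Y := by
        rw [hP.sum_subset_disjoint (disjoint_sdiff_inter Y Z), sdiff_union_inter]
    _ = principalMinor (symmDiffKernel K Z) Y :=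
        principalMinor_congr fun x hx y _ => by simp [symmDiffKernel, hx]

end

theorem stmt_15_general {E : Type*} [Fintype E] [DecidableEq E] (Z : Finset E)
    (P : Finset E → ℝ)
    (K : Matrix E E ℝ)
    (hdet : ∀ Y : Finset E,
      (∑ X ∈ Finset.univ.filter (fun X : Finset E => Y ⊆ X), P X)
        = Matrix.det (Matrix.of fun a b : {x // x ∈ Y} => K (a : E) (b : E))) :
    ∀ Y : Finset E,
      (∑ X ∈ Finset.univ.filter (fun X : Finset E => Y ⊆ X), P (symmDiff X Z))
        = Matrix.det (Matrix.of fun a b : {x // x ∈ Y} =>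
            if (a : E) ∈ Z then (if (a : E) = (b : E) then 1 else 0) - K (a : E) (b : E)
            else K (a : E) (b : E)) :=
  IsDeterminantal.symmDiff hdet Z

/-- Complementation principle for determinantal processes on a
finite set. -/
theorem stmt_15 {E : Type*} [Fintype E] [DecidableEq E] (Z : Finset E)
    (P : Finset E → ℝ) (hP0 : ∀ X, 0 ≤ P X) (hP1 : ∑ X : Finset E, P X = 1)
    (K : Matrix E E ℝ)
    (hdet : ∀ Y : Finset E,
      (∑ X ∈ Finset.univ.filter (fun X : Finset E => Y ⊆ X), P X)
        = Matrix.det (Matrix.of fun a b : {x // x ∈ Y} => K (a : E) (b : E))) :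
    ∀ Y : Finset E,
      (∑ X ∈ Finset.univ.filter (fun X : Finset E => Y ⊆ X), P (symmDiff X Z))
        = Matrix.det (Matrix.of fun a b : {x // x ∈ Y} =>
            if (a : E) ∈ Z then (if (a : E) = (b : E) then 1 else 0) - K (a : E) (b : E)
            else K (a : E) (b : E)) :=
  stmt_15_general Z P K hdet
end

section
/- Let X be a finite subset of R, f: X → R≥0 a weight function that is nonzero at least at N points, and p₀,…,p_{N−1} the monic orthogonal polynomials for the inner product ⟨g,h⟩ = Σ_{x∈X} g(x)h(x)f(x). Define the N-point polynomial ensemble Prob(Y) = c · ∏_{x∈Y} f(x) · ∏_{x<x' in Y}(x−x')² on N-point subsets Y of X (with normalizing constant c). Then this is a determinantal point process with correlation kernel K(x,y) = √(f(x)f(y)) Σ_{n=0}^{N−1} p_n(x)p_n(y)/‖p_n‖², i.e., for every n-point subset {y₁,…,y_n} ⊆ X, the probability that the random N-point set contains {y₁,…,y_n} equals det[K(y_i,y_j)]_{i,j=1}^n. -/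
open Finset Matrix Polynomial

noncomputable def gK (N : ℕ) (A : ℕ → ℝ → ℝ) (x y : ℝ) : ℝ :=
  ∑ n ∈ Finset.range N, A n x * A n y

noncomputable def gM (N : ℕ) (A : ℕ → ℝ → ℝ) (S : Finset ℝ) : ℝ :=
  (Matrix.of fun a b : {x // x ∈ S} => gK N A (a : ℝ) (b : ℝ)).det

lemma gK_symm (N : ℕ) (A : ℕ → ℝ → ℝ) (x y : ℝ) : gK N A x y = gK N A y x :=
  Finset.sum_congr rfl fun n _ => mul_comm _ _


private lemma det_updateRow_sum' {κ : Type*} [Fintype κ] [DecidableEq κ]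
    (M : Matrix κ κ ℝ) (i : κ) {α : Type*} [DecidableEq α] (s : Finset α) (c : α → ℝ) (w : α → κ → ℝ) :
    (M.updateRow i (fun k => ∑ a ∈ s, c a * w a k)).det
      = ∑ a ∈ s, c a * (M.updateRow i (w a)).det := by
  induction s using Finset.induction with
  | empty =>
      simp only [Finset.sum_empty]
      have : (fun _ : κ => (0:ℝ)) = (0:ℝ) • (fun _ : κ => (0:ℝ)) := by funext k; simp
      rw [this, Matrix.det_updateRow_smul]; simp
  | @insert a s ha IH =>
      have h1 : (fun k => ∑ b ∈ insert a s, c b * w b k)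
          = (c a • w a) + (fun k => ∑ b ∈ s, c b * w b k) := by
        funext k; simp [Finset.sum_insert ha]
      rw [h1, Matrix.det_updateRow_add, Matrix.det_updateRow_smul, IH, Finset.sum_insert ha]

private lemma det_updateCol_sum' {κ : Type*} [Fintype κ] [DecidableEq κ]
    (M : Matrix κ κ ℝ) (i : κ) {α : Type*} [DecidableEq α] (s : Finset α) (c : α → ℝ) (w : α → κ → ℝ) :
    (M.updateCol i (fun k => ∑ a ∈ s, c a * w a k)).det
      = ∑ a ∈ s, c a * (M.updateCol i (w a)).det := by
  induction s using Finset.induction with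
  | empty =>
      simp only [Finset.sum_empty]
      have : (fun _ : κ => (0:ℝ)) = (0:ℝ) • (fun _ : κ => (0:ℝ)) := by funext k; simp
      rw [this, Matrix.det_updateCol_smul]; simp
  | @insert a s ha IH =>
      have h1 : (fun k => ∑ b ∈ insert a s, c b * w b k)
          = (c a • w a) + (fun k => ∑ b ∈ s, c b * w b k) := by
        funext k; simp [Finset.sum_insert ha]
      rw [h1, Matrix.det_updateCol_add, Matrix.det_updateCol_smul, IH, Finset.sum_insert ha]

/-- Matrix determinant lemma via column expansion. -/
private lemma det_add_rankOne {κ : Type*} [Fintype κ] [DecidableEq κ] (T : Finset κ)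
    (u v : κ → ℝ) :
    ∀ D : Matrix κ κ ℝ,
      (Matrix.of fun i j => D i j + if j ∈ T then v j * u i else 0).det
        = D.det + ∑ j ∈ T, v j * (D.updateCol j u).det := by
  induction T using Finset.induction with
  | empty => intro D; simp; rfl
  | @insert j₀ T hj₀ IH =>
      intro D
      have h1 : (Matrix.of fun i j => D i j + if j ∈ insert j₀ T then v j * u i else 0)
          = (Matrix.of fun i j => D i j + if j ∈ T then v j * u i else 0).updateCol j₀
              ((fun i => D i j₀) + v j₀ • u) := by
        ext i j
        by_cases h : j = j₀
        · subst h; simp [Matrix.updateCol_apply, hj₀]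
        · simp [Matrix.updateCol_apply, h, Finset.mem_insert]
      rw [h1, Matrix.det_updateCol_add, Matrix.det_updateCol_smul]
      have h3 : (Matrix.of fun i j => D i j + if j ∈ T then v j * u i else 0).updateCol j₀
            (fun i => D i j₀)
          = Matrix.of fun i j => D i j + if j ∈ T then v j * u i else 0 := by
        ext i j
        by_cases h : j = j₀
        · subst h; simp [Matrix.updateCol_apply, hj₀]
        · simp [Matrix.updateCol_apply, h]
      have h4 : (Matrix.of fun i j => D i j + if j ∈ T then v j * u i else 0).updateCol j₀ u
          = Matrix.of fun i j => (D.updateCol j₀ u) i j + if j ∈ T then v j * u i else 0 := by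
        ext i j
        by_cases h : j = j₀
        · subst h; simp [Matrix.updateCol_apply, hj₀]
        · simp [Matrix.updateCol_apply, h]
      rw [h3, h4, IH D, IH (D.updateCol j₀ u)]
      have h5 : ∀ j ∈ T, ((D.updateCol j₀ u).updateCol j u).det = 0 := by
        intro j hj
        refine Matrix.det_zero_of_column_eq (show j ≠ j₀ from fun h => hj₀ (h ▸ hj)) fun k => ?_
        simp [Matrix.updateCol_apply, (show j ≠ j₀ from fun h => hj₀ (h ▸ hj))]
      have h6 : ∑ j ∈ T, v j * ((D.updateCol j₀ u).updateCol j u).det = 0 :=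
        Finset.sum_eq_zero fun j hj => by rw [h5 j hj, mul_zero]
      rw [h6, Finset.sum_insert hj₀]
      ring

lemma lemA (N : ℕ) (A : ℕ → ℝ → ℝ) (E : Finset ℝ)
    (hA : ∀ m ∈ Finset.range N, ∀ n ∈ Finset.range N,
      (∑ x ∈ E, A m x * A n x) = if m = n then 1 else 0)
    (S : Finset ℝ) (hS : S ⊆ E) :
    ∑ x ∈ E \ S, gM N A (insert x S) = ((N : ℝ) - S.card) * gM N A S := by
  classical
  set σ := {y // y ∈ S} with hσ
  set vx : ℝ → (σ ⊕ PUnit.{1}) → ℝ := fun x => Sum.elim (fun a : σ => (a : ℝ)) (fun _ => x)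
    with hvx
  set Nx : ℝ → Matrix (σ ⊕ PUnit.{1}) (σ ⊕ PUnit.{1}) ℝ :=
    fun x => Matrix.of fun o₁ o₂ => gK N A (vx x o₁) (vx x o₂) with hNx
  set KS : Matrix σ σ ℝ := Matrix.of fun a b => gK N A (a : ℝ) (b : ℝ) with hKS
  set R : ℕ → ℕ → Matrix (σ ⊕ PUnit.{1}) (σ ⊕ PUnit.{1}) ℝ := fun n m => Matrix.of fun o₁ o₂ =>
    Sum.elim
      (fun a : σ => Sum.elim (fun b : σ => gK N A (a : ℝ) (b : ℝ)) (fun _ => A n (a : ℝ)) o₂)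
      (fun _ => Sum.elim (fun b : σ => A m (b : ℝ)) (fun _ => if n = m then (1:ℝ) else 0) o₂)
      o₁ with hR
  have claim3 : ∀ x : ℝ, (Nx x).det
      = ∑ n ∈ Finset.range N, ∑ m ∈ Finset.range N, A n x * (A m x * (R n m).det) := by
    intro x
    have col : (fun o => Nx x o (Sum.inr PUnit.unit))
        = fun o => ∑ n ∈ Finset.range N, A n x * A n (vx x o) := by
      funext o
      show gK N A (vx x o) x = _
      rw [gK_symm]
      rfl
    have e1 : (Nx x).det
        = ∑ n ∈ Finset.range N,
            A n x * ((Nx x).updateCol (Sum.inr PUnit.unit) (fun o => A n (vx x o))).det := by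
      conv_lhs => rw [← Matrix.updateCol_eq_self (Nx x) (Sum.inr PUnit.unit)]
      rw [show (fun o => Nx x o (Sum.inr PUnit.unit))
          = fun o => ∑ n ∈ Finset.range N, A n x * A n (vx x o) from col]
      exact det_updateCol_sum' _ _ _ _ _
    rw [e1]
    refine Finset.sum_congr rfl fun n hn => ?_
    set Q := (Nx x).updateCol (Sum.inr PUnit.unit) (fun o => A n (vx x o)) with hQ
    have row : (fun o => Q (Sum.inr PUnit.unit) o)
        = fun o => ∑ m ∈ Finset.range N,
            A m x * (Sum.elim (fun b : σ => A m (b : ℝ))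
              (fun _ => if n = m then (1:ℝ) else 0) o) := by
      funext o
      rcases o with b | u
      · have h1 : Q (Sum.inr PUnit.unit) (Sum.inl b) = gK N A x (b : ℝ) := by
          rw [hQ, Matrix.updateCol_apply, if_neg (by exact Sum.inl_ne_inr)]
          rfl
        rw [h1]
        exact Finset.sum_congr rfl fun m _ => rfl
      · have h1 : Q (Sum.inr PUnit.unit) (Sum.inr u) = A n x := by
          rw [hQ, Matrix.updateCol_apply, if_pos rfl]
          rfl
        rw [h1]
        have h2 : ∀ m ∈ Finset.range N,
            A m x * (Sum.elim (fun b : σ => A m (b : ℝ))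
              (fun _ => if n = m then (1:ℝ) else 0) (Sum.inr u))
            = if n = m then A m x else 0 := by
          intro m _
          simp [mul_ite]
        rw [Finset.sum_congr rfl h2, Finset.sum_ite_eq, if_pos hn]
    have e2 : Q.det = ∑ m ∈ Finset.range N,
        A m x * (Q.updateRow (Sum.inr PUnit.unit)
          (Sum.elim (fun b : σ => A m (b : ℝ)) (fun _ => if n = m then (1:ℝ) else 0))).det := by
      conv_lhs => rw [← Matrix.updateRow_eq_self Q (Sum.inr PUnit.unit)]
      rw [show (Q (Sum.inr PUnit.unit)) = fun o => ∑ m ∈ Finset.range N,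
          A m x * (Sum.elim (fun b : σ => A m (b : ℝ))
            (fun _ => if n = m then (1:ℝ) else 0) o) from row]
      exact det_updateRow_sum' _ _ _ _ _
    rw [e2, Finset.mul_sum]
    refine Finset.sum_congr rfl fun m hm => ?_
    have hU : Q.updateRow (Sum.inr PUnit.unit)
        (Sum.elim (fun b : σ => A m (b : ℝ)) (fun _ => if n = m then (1:ℝ) else 0)) = R n m := by
      ext o₁ o₂
      rcases o₁ with a | u <;> rcases o₂ with b | u'
      · rw [Matrix.updateRow_apply, if_neg (by exact Sum.inl_ne_inr), hQ,
          Matrix.updateCol_apply, if_neg (by exact Sum.inl_ne_inr)]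
        rfl
      · rw [Matrix.updateRow_apply, if_neg (by exact Sum.inl_ne_inr), hQ,
          Matrix.updateCol_apply, if_pos rfl]
        rfl
      · rw [Matrix.updateRow_apply, if_pos rfl]
        rfl
      · rw [Matrix.updateRow_apply, if_pos rfl]
        rfl
    rw [hU]
  have claim4 : ∑ x ∈ E, (Nx x).det = ∑ n ∈ Finset.range N, (R n n).det := by
    rw [Finset.sum_congr rfl fun x _ => claim3 x, Finset.sum_comm]
    refine Finset.sum_congr rfl fun n hn => ?_
    rw [Finset.sum_comm]
    have inner : ∀ m ∈ Finset.range N,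
        ∑ x ∈ E, A n x * (A m x * (R n m).det) = if n = m then (R n m).det else 0 := by
      intro m hm
      have : ∀ x ∈ E, A n x * (A m x * (R n m).det) = (A n x * A m x) * (R n m).det := by
        intro x _; ring
      rw [Finset.sum_congr rfl this, ← Finset.sum_mul, hA n hn m hm]
      by_cases h : n = m <;> simp [h]
    rw [Finset.sum_congr rfl inner, Finset.sum_ite_eq, if_pos hn]
  have claim5 : ∀ n, (R n n).det
      = KS.det - ∑ b : σ, A n (b : ℝ) * (KS.updateCol b (fun a : σ => A n (a : ℝ))).det := by
    intro n
    have hblock : R n n = Matrix.fromBlocks KS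
        (Matrix.of fun (a : σ) (_ : PUnit.{1}) => A n (a : ℝ))
        (Matrix.of fun (_ : PUnit.{1}) (b : σ) => A n (b : ℝ))
        (1 : Matrix PUnit.{1} PUnit.{1} ℝ) := by
      ext o₁ o₂
      rcases o₁ with a | u <;> rcases o₂ with b | u' <;>
        simp [hR, hKS, Matrix.fromBlocks, Matrix.one_apply]
    rw [hblock, Matrix.det_fromBlocks_one₂₂]
    have hprod : KS - (Matrix.of fun (a : σ) (_ : PUnit.{1}) => A n (a : ℝ))
          * (Matrix.of fun (_ : PUnit.{1}) (b : σ) => A n (b : ℝ))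
        = Matrix.of fun a b : σ => KS a b
            + if b ∈ (Finset.univ : Finset σ) then (-(A n (b : ℝ))) * (A n (a : ℝ)) else 0 := by
      ext a b
      simp [Matrix.mul_apply, Matrix.sub_apply]
      ring
    rw [hprod, det_add_rankOne]
    have : ∑ b ∈ (Finset.univ : Finset σ),
        (-(A n (b : ℝ))) * (KS.updateCol b fun a : σ => A n (a : ℝ)).det
        = - ∑ b : σ, A n (b : ℝ) * (KS.updateCol b fun a : σ => A n (a : ℝ)).det := by
      rw [← Finset.sum_neg_distrib]
      exact Finset.sum_congr rfl fun b _ => by ring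
    rw [this]
    ring
  have claim6 : ∑ n ∈ Finset.range N,
      ∑ b : σ, A n (b : ℝ) * (KS.updateCol b (fun a : σ => A n (a : ℝ))).det
      = (S.card : ℝ) * KS.det := by
    rw [Finset.sum_comm]
    have inner : ∀ b : σ,
        ∑ n ∈ Finset.range N, A n (b : ℝ) * (KS.updateCol b (fun a : σ => A n (a : ℝ))).det
          = KS.det := by
      intro b
      rw [← det_updateCol_sum' KS b (Finset.range N) (fun n => A n (b : ℝ))
        (fun n (a : σ) => A n (a : ℝ))]
      have hcol : (fun a : σ => ∑ n ∈ Finset.range N, A n (b : ℝ) * A n (a : ℝ))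
          = fun a : σ => KS a b := by
        funext a
        show gK N A (b : ℝ) (a : ℝ) = _
        rw [gK_symm]
        rfl
      rw [hcol, Matrix.updateCol_eq_self]
    rw [Finset.sum_congr rfl fun b _ => inner b, Finset.sum_const, Finset.card_univ,
      Fintype.card_coe, nsmul_eq_mul]
  have claim7 : ∀ x ∈ S, (Nx x).det = 0 := by
    intro x hx
    refine Matrix.det_zero_of_row_eq (M := Nx x) (i := Sum.inl ⟨x, hx⟩)
      (j := Sum.inr PUnit.unit) (by exact Sum.inl_ne_inr) ?_
    rfl
  have claim8 : ∀ x ∈ E \ S, gM N A (insert x S) = (Nx x).det := by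
    intro x hx
    obtain ⟨hxE, hxS⟩ := Finset.mem_sdiff.mp hx
    let e : (σ ⊕ PUnit.{1}) ≃ {y // y ∈ insert x S} :=
      { toFun := Sum.elim (fun a : σ => ⟨(a : ℝ), Finset.mem_insert_of_mem a.2⟩)
          (fun _ => ⟨x, Finset.mem_insert_self x S⟩)
        invFun := fun y => if h : (y : ℝ) ∈ S then Sum.inl ⟨(y : ℝ), h⟩ else Sum.inr PUnit.unit
        left_inv := by
          rintro (a | ⟨⟩)
          · exact dif_pos a.2
          · exact dif_neg hxS
        right_inv := by
          intro y
          show Sum.elim (fun a : σ => (⟨(a : ℝ), Finset.mem_insert_of_mem a.2⟩ :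
              {y // y ∈ insert x S})) (fun _ => ⟨x, Finset.mem_insert_self x S⟩)
            (if h : (y : ℝ) ∈ S then Sum.inl ⟨(y : ℝ), h⟩ else Sum.inr PUnit.unit) = y
          by_cases h : (y : ℝ) ∈ S
          · rw [dif_pos h]
            exact Subtype.ext rfl
          · rw [dif_neg h]
            exact Subtype.ext ((Finset.mem_insert.mp y.2).resolve_right h).symm }
    rw [gM, ← Matrix.det_submatrix_equiv_self e
      (Matrix.of fun a b : {y // y ∈ insert x S} => gK N A (a : ℝ) (b : ℝ))]
    congr 1
    ext o₁ o₂
    rcases o₁ with a | u <;> rcases o₂ with b | u' <;> rfl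
  calc ∑ x ∈ E \ S, gM N A (insert x S)
      = ∑ x ∈ E \ S, (Nx x).det := Finset.sum_congr rfl claim8
    _ = ∑ x ∈ E, (Nx x).det - ∑ x ∈ S, (Nx x).det := Finset.sum_sdiff_eq_sub hS
    _ = ∑ x ∈ E, (Nx x).det := by rw [Finset.sum_eq_zero claim7, sub_zero]
    _ = ∑ n ∈ Finset.range N, (R n n).det := claim4
    _ = ∑ n ∈ Finset.range N, (KS.det
          - ∑ b : σ, A n (b : ℝ) * (KS.updateCol b (fun a : σ => A n (a : ℝ))).det) :=
        Finset.sum_congr rfl fun n _ => claim5 n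
    _ = (N : ℝ) * KS.det - (S.card : ℝ) * KS.det := by
        rw [Finset.sum_sub_distrib, Finset.sum_const, Finset.card_range, claim6, nsmul_eq_mul]
    _ = ((N : ℝ) - S.card) * gM N A S := by
        have : gM N A S = KS.det := rfl
        rw [this]; ring

lemma gM_empty (N : ℕ) (A : ℕ → ℝ → ℝ) : gM N A ∅ = 1 := by
  haveI : IsEmpty {x // x ∈ (∅ : Finset ℝ)} := ⟨fun a => (Finset.notMem_empty _ a.2)⟩
  simp [gM]

lemma gM_card_gt (N : ℕ) (A : ℕ → ℝ → ℝ) (S : Finset ℝ) (h : N < S.card) :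
    gM N A S = 0 := by
  classical
  set σ := {x // x ∈ S}
  set B : Matrix (Fin N) σ ℝ := Matrix.of fun n a => A n (a : ℝ) with hB
  have hfact : (Matrix.of fun a b : σ => gK N A (a : ℝ) (b : ℝ)) = Bᵀ * B := by
    ext a b
    simp [Matrix.mul_apply, hB, gK, Fin.sum_univ_eq_sum_range (fun n => A n ↑a * A n ↑b)]
  -- find a nonzero kernel vector of B
  have hcard : N < Fintype.card σ := by
    rw [Fintype.card_coe]; exact h
  have hker : ∃ v : σ → ℝ, v ≠ 0 ∧ B.mulVec v = 0 := by
    have hlt : Module.finrank ℝ (Fin N → ℝ) < Module.finrank ℝ (σ → ℝ) := by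
      simp only [Module.finrank_fintype_fun_eq_card, Fintype.card_fin]
      exact hcard
    by_contra hcon
    push_neg at hcon
    have hinj : Function.Injective B.mulVecLin := by
      rw [← LinearMap.ker_eq_bot, Submodule.eq_bot_iff]
      intro v hv
      by_contra hv0
      exact (hcon v hv0) hv
    have := LinearMap.finrank_le_finrank_of_injective hinj
    omega
  obtain ⟨v, hv0, hv⟩ := hker
  rw [gM, hfact]
  rw [← Matrix.exists_mulVec_eq_zero_iff]
  refine ⟨v, hv0, ?_⟩
  rw [← Matrix.mulVec_mulVec, hv, Matrix.mulVec_zero]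

lemma lemB (N : ℕ) (A : ℕ → ℝ → ℝ) (E : Finset ℝ)
    (hA : ∀ m ∈ Finset.range N, ∀ n ∈ Finset.range N,
      (∑ x ∈ E, A m x * A n x) = if m = n then 1 else 0) :
    ∀ j (S : Finset ℝ), S ⊆ E → S.card + j = N →
      ∑ Y ∈ E.powerset.filter (fun Y => Y.card = N ∧ S ⊆ Y), gM N A Y = gM N A S := by
  intro j
  induction j with
  | zero =>
      intro S hSE hcard
      rw [Nat.add_zero] at hcard
      have : E.powerset.filter (fun Y => Y.card = N ∧ S ⊆ Y) = {S} := by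
        ext Y
        simp only [Finset.mem_filter, Finset.mem_powerset, Finset.mem_singleton]
        constructor
        · rintro ⟨hYE, hYN, hSY⟩
          exact (Finset.eq_of_subset_of_card_le hSY (by omega)).symm
        · rintro rfl
          exact ⟨hSE, hcard, Finset.Subset.refl _⟩
      rw [this, Finset.sum_singleton]
  | succ j IH =>
      intro S hSE hcard
      have key : ∀ x ∈ E \ S,
          ∑ Y ∈ E.powerset.filter (fun Y => Y.card = N ∧ insert x S ⊆ Y), gM N A Y
            = gM N A (insert x S) := by
        intro x hx
        obtain ⟨hxE, hxS⟩ := Finset.mem_sdiff.mp hx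
        exact IH (insert x S) (Finset.insert_subset hxE hSE)
          (by rw [Finset.card_insert_of_notMem hxS]; omega)
      have lhs1 : ∑ x ∈ E \ S,
          ∑ Y ∈ E.powerset.filter (fun Y => Y.card = N ∧ insert x S ⊆ Y), gM N A Y
          = ((N : ℝ) - S.card) * gM N A S := by
        rw [Finset.sum_congr rfl key]
        exact lemA N A E hA S hSE
      have lhs2 : ∑ x ∈ E \ S,
          ∑ Y ∈ E.powerset.filter (fun Y => Y.card = N ∧ insert x S ⊆ Y), gM N A Y
          = ((j : ℝ) + 1) * ∑ Y ∈ E.powerset.filter (fun Y => Y.card = N ∧ S ⊆ Y), gM N A Y := by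
        have step1 : ∀ x ∈ E \ S,
            ∑ Y ∈ E.powerset.filter (fun Y => Y.card = N ∧ insert x S ⊆ Y), gM N A Y
            = ∑ Y ∈ E.powerset, if Y.card = N ∧ insert x S ⊆ Y then gM N A Y else 0 := by
          intro x _
          rw [Finset.sum_filter]
        rw [Finset.sum_congr rfl step1, Finset.sum_comm]
        have step2 : ∀ Y ∈ E.powerset,
            ∑ x ∈ E \ S, (if Y.card = N ∧ insert x S ⊆ Y then gM N A Y else 0)
            = ((j : ℝ) + 1) * (if Y.card = N ∧ S ⊆ Y then gM N A Y else 0) := by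
          intro Y hY
          have hYE := Finset.mem_powerset.mp hY
          by_cases hC : Y.card = N ∧ S ⊆ Y
          · obtain ⟨hYN, hSY⟩ := hC
            have hins : ∀ x, (Y.card = N ∧ insert x S ⊆ Y) ↔ x ∈ Y \ S ∨ (x ∈ S ∧ S ⊆ Y) := by
              intro x
              constructor
              · rintro ⟨-, hxSY⟩
                rw [Finset.insert_subset_iff] at hxSY
                by_cases hxS : x ∈ S
                · exact Or.inr ⟨hxS, hxSY.2⟩
                · exact Or.inl (Finset.mem_sdiff.mpr ⟨hxSY.1, hxS⟩)
              · rintro (hx | ⟨hxS, -⟩)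
                · obtain ⟨hxY, -⟩ := Finset.mem_sdiff.mp hx
                  exact ⟨hYN, Finset.insert_subset hxY hSY⟩
                · exact ⟨hYN, Finset.insert_subset (hSY hxS) hSY⟩
            have : ∀ x ∈ E \ S, (if Y.card = N ∧ insert x S ⊆ Y then gM N A Y else 0)
                = if x ∈ Y \ S then gM N A Y else 0 := by
              intro x hx
              obtain ⟨-, hxS⟩ := Finset.mem_sdiff.mp hx
              by_cases hxY : x ∈ Y \ S
              · rw [if_pos ((hins x).mpr (Or.inl hxY)), if_pos hxY]
              · rw [if_neg, if_neg hxY]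
                intro hcon
                rcases (hins x).mp hcon with h | h
                · exact hxY h
                · exact hxS h.1
            rw [Finset.sum_congr rfl this, ← Finset.sum_filter]
            have hfil : (E \ S).filter (fun x => x ∈ Y \ S) = Y \ S := by
              ext x
              simp only [Finset.mem_filter, Finset.mem_sdiff]
              exact ⟨fun ⟨_, h⟩ => h, fun ⟨hxY, hxS⟩ => ⟨⟨hYE hxY, hxS⟩, hxY, hxS⟩⟩
            rw [hfil, Finset.sum_const, if_pos ⟨hYN, hSY⟩, Finset.card_sdiff_of_subset hSY, hYN,
              nsmul_eq_mul]
            have : N - S.card = j + 1 := by omega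
            rw [this]
            push_cast
            ring
          · rw [if_neg hC, mul_zero]
            refine Finset.sum_eq_zero fun x hx => ?_
            rw [if_neg]
            intro ⟨h1, h2⟩
            exact hC ⟨h1, (Finset.subset_insert x S).trans h2⟩
        rw [Finset.sum_congr rfl step2, ← Finset.mul_sum]
        congr 1
        rw [← Finset.sum_filter]
      have hj1 : ((j : ℝ) + 1) ≠ 0 := by positivity
      have hNS : (N : ℝ) - S.card = (j : ℝ) + 1 := by
        have : S.card + (j + 1) = N := hcard
        push_cast [← this]
        ring
      have := lhs1.symm.trans lhs2
      rw [hNS] at this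
      exact (mul_left_cancel₀ hj1 this.symm)

noncomputable def nuP (E : Finset ℝ) (f : ℝ → ℝ) (p : ℕ → Polynomial ℝ) (n : ℕ) : ℝ :=
  ∑ x ∈ E, ((p n).eval x)^2 * f x

noncomputable def AP (E : Finset ℝ) (f : ℝ → ℝ) (p : ℕ → Polynomial ℝ) (n : ℕ) (x : ℝ) : ℝ :=
  Real.sqrt (f x) * (p n).eval x / Real.sqrt (nuP E f p n)

lemma weight_eq (N : ℕ) (E : Finset ℝ) (f : ℝ → ℝ) (p : ℕ → Polynomial ℝ)
    (hf0 : ∀ x ∈ E, 0 ≤ f x)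
    (hnu : ∀ n < N, 0 < nuP E f p n)
    (hmonic : ∀ n < N, (p n).Monic) (hdeg : ∀ n < N, (p n).natDegree = n)
    (Y : Finset ℝ) (hYE : Y ⊆ E) (hYcard : Y.card = N) :
    (∏ x ∈ Y, f x) * ∏ q ∈ Y.offDiag, |q.1 - q.2|
      = (∏ n ∈ Finset.range N, nuP E f p n) * gM N (AP E f p) Y := by
  classical
  set A := AP E f p with hA
  let y := Y.orderIsoOfFin hYcard
  set g : Fin N → ℝ := fun i => ((y i : {x // x ∈ Y}) : ℝ) with hg
  have hgm : StrictMono g := fun i j hij => Subtype.coe_lt_coe.mpr (y.strictMono hij)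
  have hgY : ∀ i, g i ∈ Y := fun i => (y i).2
  have hgf : ∀ i, 0 ≤ f (g i) := fun i => hf0 _ (hYE (hgY i))
  set V : ℝ := ∏ q ∈ (Finset.univ : Finset (Fin N × Fin N)).filter (fun q => q.1 < q.2),
    (g q.2 - g q.1) with hV
  -- the minor as a Fin N determinant
  have hminor : gM N A Y = (Matrix.of fun i j : Fin N => gK N A (g i) (g j)).det := by
    rw [gM, ← Matrix.det_submatrix_equiv_self y.toEquiv]
    congr 1
  set B : Matrix (Fin N) (Fin N) ℝ := Matrix.of fun n i => A n (g i) with hB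
  have hfact : (Matrix.of fun i j : Fin N => gK N A (g i) (g j)) = Bᵀ * B := by
    ext i j
    simp [Matrix.mul_apply, hB, gK, Fin.sum_univ_eq_sum_range (fun n => A n (g i) * A n (g j))]
  set W : Matrix (Fin N) (Fin N) ℝ := Matrix.of fun i j : Fin N => (p (j : ℕ)).eval (g i)
    with hW
  have hdetW : W.det = (Matrix.vandermonde g).det := by
    rw [hW]
    exact (Matrix.det_eval_matrixOfPolynomials_eq_det_vandermonde g (fun j => p (j : ℕ))
      (fun i => hdeg i i.isLt) (fun i => hmonic i i.isLt)).symm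
  have hvdm : (Matrix.vandermonde g).det = V := by
    rw [Matrix.det_vandermonde, hV, Finset.prod_sigma']
    refine Finset.prod_bij' (fun x _ => ((x.1, x.2) : Fin N × Fin N))
      (fun q _ => (⟨q.1, q.2⟩ : Σ _ : Fin N, Fin N)) ?_ ?_ ?_ ?_ ?_
    · intro x hx
      rw [Finset.mem_sigma] at hx
      simp only [Finset.mem_filter, Finset.mem_univ, true_and]
      exact Finset.mem_Ioi.mp hx.2
    · intro q hq
      rw [Finset.mem_sigma]
      exact ⟨Finset.mem_univ _, Finset.mem_Ioi.mpr (Finset.mem_filter.mp hq).2⟩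
    · intro x hx; rfl
    · intro q hq; rfl
    · intro x hx; rfl
  have hdetB : B.det = (∏ n : Fin N, (Real.sqrt (nuP E f p (n : ℕ)))⁻¹)
      * ((∏ i : Fin N, Real.sqrt (f (g i))) * V) := by
    have hB' : B = Matrix.of fun n i : Fin N =>
        (fun k : Fin N => (Real.sqrt (nuP E f p (k : ℕ)))⁻¹) n *
          (Matrix.of fun n' i' : Fin N => Real.sqrt (f (g i')) * Wᵀ n' i') n i := by
      ext n i
      simp [hB, hA, AP, hW, Matrix.transpose_apply, div_eq_mul_inv]
      ring
    rw [hB', Matrix.det_mul_column, Matrix.det_mul_row, Matrix.det_transpose, hdetW, hvdm]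
  have hprodf : (∏ x ∈ Y, f x) = ∏ i : Fin N, f (g i) := by
    rw [← Finset.prod_coe_sort Y f]
    exact (Equiv.prod_comp y.toEquiv (fun a : {x // x ∈ Y} => f (a : ℝ))).symm
  have hod : (∏ q ∈ Y.offDiag, |q.1 - q.2|)
      = ∏ q ∈ (Finset.univ : Finset (Fin N × Fin N)).filter (fun q => q.1 ≠ q.2),
          |g q.1 - g q.2| := by
    refine (Finset.prod_bij' (fun q (_ : q ∈ (Finset.univ : Finset (Fin N × Fin N)).filter
        (fun q => q.1 ≠ q.2)) => ((g q.1, g q.2) : ℝ × ℝ))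
      (fun q hq => ((y.symm ⟨q.1, (Finset.mem_offDiag.mp hq).1⟩ : Fin N),
        (y.symm ⟨q.2, (Finset.mem_offDiag.mp hq).2.1⟩ : Fin N)))
      ?_ ?_ ?_ ?_ ?_).symm
    · intro q hq
      exact Finset.mem_offDiag.mpr
        ⟨hgY _, hgY _, fun hc => (Finset.mem_filter.mp hq).2 (hgm.injective hc)⟩
    · intro q hq
      simp only [Finset.mem_filter, Finset.mem_univ, true_and]
      intro hc
      have := y.symm.injective hc
      rw [Subtype.mk.injEq] at this
      exact (Finset.mem_offDiag.mp hq).2.2 this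
    · intro q hq
      obtain ⟨q1, q2⟩ := q
      simp [hg]
    · intro q hq
      obtain ⟨q1, q2⟩ := q
      simp [hg]
    · intro q hq
      rfl
  have hsplit : (∏ q ∈ (Finset.univ : Finset (Fin N × Fin N)).filter (fun q => q.1 ≠ q.2),
      |g q.1 - g q.2|) = V * V := by
    rw [← Finset.prod_filter_mul_prod_filter_not
      ((Finset.univ : Finset (Fin N × Fin N)).filter (fun q => q.1 ≠ q.2))
      (fun q => q.1 < q.2), Finset.filter_filter, Finset.filter_filter]
    have h1 : (Finset.univ : Finset (Fin N × Fin N)).filter (fun q => q.1 ≠ q.2 ∧ q.1 < q.2)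
        = (Finset.univ : Finset (Fin N × Fin N)).filter (fun q => q.1 < q.2) := by
      ext q
      simp only [Finset.mem_filter, Finset.mem_univ, true_and]
      exact ⟨fun h => h.2, fun h => ⟨ne_of_lt h, h⟩⟩
    have h2 : (Finset.univ : Finset (Fin N × Fin N)).filter (fun q => q.1 ≠ q.2 ∧ ¬ q.1 < q.2)
        = (Finset.univ : Finset (Fin N × Fin N)).filter (fun q => q.2 < q.1) := by
      ext q
      simp only [Finset.mem_filter, Finset.mem_univ, true_and]
      constructor
      · rintro ⟨hne, hnlt⟩
        exact lt_of_le_of_ne (not_lt.mp hnlt) (Ne.symm hne)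
      · intro h
        exact ⟨Ne.symm (ne_of_lt h), not_lt.mpr (le_of_lt h)⟩
    rw [h1, h2]
    have h3 : (∏ q ∈ (Finset.univ : Finset (Fin N × Fin N)).filter (fun q => q.2 < q.1),
        |g q.1 - g q.2|)
        = ∏ q ∈ (Finset.univ : Finset (Fin N × Fin N)).filter (fun q => q.1 < q.2),
            |g q.2 - g q.1| := by
      refine Finset.prod_bij' (fun q _ => q.swap) (fun q _ => q.swap) ?_ ?_ ?_ ?_ ?_
      · intro q hq
        simp only [Finset.mem_filter, Finset.mem_univ, true_and] at hq ⊢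
        exact hq
      · intro q hq
        simp only [Finset.mem_filter, Finset.mem_univ, true_and] at hq ⊢
        exact hq
      · intro q hq; rfl
      · intro q hq; rfl
      · intro q hq; rfl
    rw [h3, ← Finset.prod_mul_distrib]
    have h4 : ∀ q ∈ (Finset.univ : Finset (Fin N × Fin N)).filter (fun q => q.1 < q.2),
        |g q.1 - g q.2| * |g q.2 - g q.1| = (g q.2 - g q.1) * (g q.2 - g q.1) := by
      intro q hq
      have hlt : g q.1 < g q.2 := hgm (Finset.mem_filter.mp hq).2
      rw [abs_sub_comm, abs_of_pos (sub_pos.mpr hlt)]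
    rw [Finset.prod_congr rfl h4, Finset.prod_mul_distrib, hV]
  -- final assembly
  have hνne : (∏ n ∈ Finset.range N, nuP E f p n) ≠ 0 :=
    ne_of_gt (Finset.prod_pos fun n hn => hnu n (Finset.mem_range.mp hn))
  have hcc : (∏ n : Fin N, (Real.sqrt (nuP E f p (n : ℕ)))⁻¹)
      * (∏ n : Fin N, (Real.sqrt (nuP E f p (n : ℕ)))⁻¹)
      = (∏ n ∈ Finset.range N, nuP E f p n)⁻¹ := by
    rw [← Finset.prod_mul_distrib,
      ← Fin.prod_univ_eq_prod_range (fun n => nuP E f p n) N, ← Finset.prod_inv_distrib]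
    exact Finset.prod_congr rfl fun n _ => by
      rw [← mul_inv, Real.mul_self_sqrt (le_of_lt (hnu n n.isLt))]
  have hss : (∏ i : Fin N, Real.sqrt (f (g i))) * (∏ i : Fin N, Real.sqrt (f (g i)))
      = ∏ i : Fin N, f (g i) := by
    rw [← Finset.prod_mul_distrib]
    exact Finset.prod_congr rfl fun i _ => Real.mul_self_sqrt (hgf i)
  rw [hminor, hfact, Matrix.det_mul, Matrix.det_transpose, hdetB, hprodf, hod, hsplit]
  rw [show ((∏ n : Fin N, (Real.sqrt (nuP E f p (n : ℕ)))⁻¹)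
        * ((∏ i : Fin N, Real.sqrt (f (g i))) * V))
      * ((∏ n : Fin N, (Real.sqrt (nuP E f p (n : ℕ)))⁻¹)
        * ((∏ i : Fin N, Real.sqrt (f (g i))) * V))
      = ((∏ n : Fin N, (Real.sqrt (nuP E f p (n : ℕ)))⁻¹)
          * (∏ n : Fin N, (Real.sqrt (nuP E f p (n : ℕ)))⁻¹))
        * (((∏ i : Fin N, Real.sqrt (f (g i))) * (∏ i : Fin N, Real.sqrt (f (g i))))
          * (V * V)) from by ring, hcc, hss]
  rw [mul_inv_cancel_left₀ hνne]

lemma nuP_pos (N : ℕ) (E : Finset ℝ) (f : ℝ → ℝ) (p : ℕ → Polynomial ℝ)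
    (hf0 : ∀ x ∈ E, 0 ≤ f x) (hfN : N ≤ (E.filter (fun x => f x ≠ 0)).card)
    (hmonic : ∀ n < N, (p n).Monic) (hdeg : ∀ n < N, (p n).natDegree = n) :
    ∀ n < N, 0 < nuP E f p n := by
  intro n hn
  have hne : p n ≠ 0 := (hmonic n hn).ne_zero
  have hex : ∃ x ∈ E.filter (fun x => f x ≠ 0), (p n).eval x ≠ 0 := by
    by_contra hcon
    push_neg at hcon
    have hsub : E.filter (fun x => f x ≠ 0) ⊆ (p n).roots.toFinset := by
      intro x hx
      rw [Multiset.mem_toFinset, Polynomial.mem_roots hne]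
      exact hcon x hx
    have h1 := Finset.card_le_card hsub
    have h2 := Multiset.toFinset_card_le (p n).roots
    have h3 := Polynomial.card_roots' (p n)
    rw [hdeg n hn] at h3
    omega
  obtain ⟨x, hxZ, hxroot⟩ := hex
  obtain ⟨hxE, hfx⟩ := Finset.mem_filter.mp hxZ
  refine Finset.sum_pos' (fun z hz => mul_nonneg (sq_nonneg _) (hf0 z hz)) ?_
  refine ⟨x, hxE, mul_pos (by positivity) (lt_of_le_of_ne (hf0 x hxE) (Ne.symm hfx))⟩

lemma AP_orthonormal (N : ℕ) (E : Finset ℝ) (f : ℝ → ℝ) (p : ℕ → Polynomial ℝ)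
    (hf0 : ∀ x ∈ E, 0 ≤ f x)
    (hnu : ∀ n < N, 0 < nuP E f p n)
    (horth : ∀ m < N, ∀ n < N, m ≠ n →
      ∑ x ∈ E, (p m).eval x * (p n).eval x * f x = 0) :
    ∀ m ∈ Finset.range N, ∀ n ∈ Finset.range N,
      (∑ x ∈ E, AP E f p m x * AP E f p n x) = if m = n then 1 else 0 := by
  intro m hm n hn
  rw [Finset.mem_range] at hm hn
  have hkey : ∀ x ∈ E, AP E f p m x * AP E f p n x
      = ((p m).eval x * (p n).eval x * f x)
        * ((Real.sqrt (nuP E f p m))⁻¹ * (Real.sqrt (nuP E f p n))⁻¹) := by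
    intro x hx
    have hffx : Real.sqrt (f x) * Real.sqrt (f x) = f x := Real.mul_self_sqrt (hf0 x hx)
    calc AP E f p m x * AP E f p n x
        = (Real.sqrt (f x) * Real.sqrt (f x)) * ((p m).eval x * (p n).eval x)
          * ((Real.sqrt (nuP E f p m))⁻¹ * (Real.sqrt (nuP E f p n))⁻¹) := by
          rw [AP, AP]; ring
      _ = _ := by rw [hffx]; ring
  rw [Finset.sum_congr rfl hkey, ← Finset.sum_mul]
  by_cases h : m = n
  · subst h
    have hsum : ∑ x ∈ E, (p m).eval x * (p m).eval x * f x = nuP E f p m := by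
      rw [nuP]
      exact Finset.sum_congr rfl fun x _ => by ring
    rw [hsum, ← mul_inv, Real.mul_self_sqrt (hnu m hm).le,
      mul_inv_cancel₀ (hnu m hm).ne', if_pos rfl]
  · rw [horth m hm n hn h, zero_mul, if_neg h]

lemma entry_eq (N : ℕ) (E : Finset ℝ) (f : ℝ → ℝ) (p : ℕ → Polynomial ℝ)
    (hf0 : ∀ x ∈ E, 0 ≤ f x)
    (hnu : ∀ n < N, 0 < nuP E f p n)
    (Y₀ : Finset ℝ) (hY₀E : Y₀ ⊆ E) :
    (Matrix.of fun a b : {x // x ∈ Y₀} =>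
        Real.sqrt (f (a : ℝ) * f (b : ℝ)) *
          ∑ n ∈ Finset.range N,
            (p n).eval (a : ℝ) * (p n).eval (b : ℝ) /
              (∑ x ∈ E, ((p n).eval x) ^ 2 * f x))
      = Matrix.of fun a b : {x // x ∈ Y₀} => gK N (AP E f p) (a : ℝ) (b : ℝ) := by
  ext a b
  have ha : (a : ℝ) ∈ E := hY₀E a.2
  have hb : (b : ℝ) ∈ E := hY₀E b.2
  simp only [Matrix.of_apply, gK, Finset.mul_sum]
  refine Finset.sum_congr rfl fun n hn => ?_
  rw [Finset.mem_range] at hn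
  have hνsum : (∑ x ∈ E, ((p n).eval x) ^ 2 * f x) = nuP E f p n := rfl
  rw [hνsum, AP, AP, Real.sqrt_mul (hf0 _ ha), div_mul_div_comm,
    Real.mul_self_sqrt (hnu n hn).le]
  ring

/-- The `N`-point polynomial ensemble with weight `f` on a finite
subset of `ℝ` is determinantal, with the normalized Christoffel–Darboux kernel
as correlation kernel: inclusion probabilities are given by minors of the kernel. -/
theorem stmt_16 (N : ℕ) (E : Finset ℝ) (f : ℝ → ℝ)
    (hf0 : ∀ x ∈ E, 0 ≤ f x) (hfN : N ≤ (E.filter (fun x => f x ≠ 0)).card)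
    (p : ℕ → Polynomial ℝ)
    (hmonic : ∀ n < N, (p n).Monic) (hdeg : ∀ n < N, (p n).natDegree = n)
    (horth : ∀ m < N, ∀ n < N, m ≠ n →
      ∑ x ∈ E, (p m).eval x * (p n).eval x * f x = 0) :
    ∀ Y₀ ∈ E.powerset,
      (∑ Y ∈ E.powerset.filter (fun Y => Y.card = N ∧ Y₀ ⊆ Y),
          ((∏ x ∈ Y, f x) * ∏ q ∈ Y.offDiag, |q.1 - q.2|)) /
        (∑ Y ∈ E.powerset.filter (fun Y => Y.card = N),
          ((∏ x ∈ Y, f x) * ∏ q ∈ Y.offDiag, |q.1 - q.2|))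
      = Matrix.det (Matrix.of fun a b : {x // x ∈ Y₀} =>
          Real.sqrt (f (a : ℝ) * f (b : ℝ)) *
            ∑ n ∈ Finset.range N,
              (p n).eval (a : ℝ) * (p n).eval (b : ℝ) /
                (∑ x ∈ E, ((p n).eval x) ^ 2 * f x)) := by
  classical
  intro Y₀ hY₀
  have hY₀E : Y₀ ⊆ E := Finset.mem_powerset.mp hY₀
  have hnu : ∀ n < N, 0 < nuP E f p n := nuP_pos N E f p hf0 hfN hmonic hdeg
  have honb := AP_orthonormal N E f p hf0 hnu horth
  have hC : (0:ℝ) < ∏ n ∈ Finset.range N, nuP E f p n :=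
    Finset.prod_pos fun n hn => hnu n (Finset.mem_range.mp hn)
  have hRHS : (Matrix.of fun a b : {x // x ∈ Y₀} =>
      Real.sqrt (f (a : ℝ) * f (b : ℝ)) *
        ∑ n ∈ Finset.range N,
          (p n).eval (a : ℝ) * (p n).eval (b : ℝ) /
            (∑ x ∈ E, ((p n).eval x) ^ 2 * f x)).det = gM N (AP E f p) Y₀ := by
    rw [entry_eq N E f p hf0 hnu Y₀ hY₀E, gM]
  have hwt : ∀ Y ∈ E.powerset, Y.card = N →
      (∏ x ∈ Y, f x) * ∏ q ∈ Y.offDiag, |q.1 - q.2|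
        = (∏ n ∈ Finset.range N, nuP E f p n) * gM N (AP E f p) Y := fun Y hY hcard =>
    weight_eq N E f p hf0 hnu hmonic hdeg Y (Finset.mem_powerset.mp hY) hcard
  have hden : (∑ Y ∈ E.powerset.filter (fun Y => Y.card = N),
      ((∏ x ∈ Y, f x) * ∏ q ∈ Y.offDiag, |q.1 - q.2|))
      = ∏ n ∈ Finset.range N, nuP E f p n := by
    have h1 : E.powerset.filter (fun Y => Y.card = N)
        = E.powerset.filter (fun Y => Y.card = N ∧ ∅ ⊆ Y) := by
      apply Finset.filter_congr
      intro Y _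
      simp
    have h2 : ∀ Y ∈ E.powerset.filter (fun Y => Y.card = N),
        (∏ x ∈ Y, f x) * ∏ q ∈ Y.offDiag, |q.1 - q.2|
          = (∏ n ∈ Finset.range N, nuP E f p n) * gM N (AP E f p) Y := by
      intro Y hY
      obtain ⟨hYp, hYc⟩ := Finset.mem_filter.mp hY
      exact hwt Y hYp hYc
    rw [Finset.sum_congr rfl h2, ← Finset.mul_sum, h1,
      lemB N (AP E f p) E honb N ∅ (Finset.empty_subset E) (by simp), gM_empty, mul_one]
  rw [hden, hRHS]
  by_cases hcard : Y₀.card ≤ N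
  · have h2 : ∀ Y ∈ E.powerset.filter (fun Y => Y.card = N ∧ Y₀ ⊆ Y),
        (∏ x ∈ Y, f x) * ∏ q ∈ Y.offDiag, |q.1 - q.2|
          = (∏ n ∈ Finset.range N, nuP E f p n) * gM N (AP E f p) Y := by
      intro Y hY
      obtain ⟨hYp, hYc, -⟩ := Finset.mem_filter.mp hY
      exact hwt Y hYp hYc
    rw [Finset.sum_congr rfl h2, ← Finset.mul_sum,
      lemB N (AP E f p) E honb (N - Y₀.card) Y₀ hY₀E (by omega)]
    rw [mul_comm, mul_div_assoc, div_self hC.ne', mul_one]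
  · push_neg at hcard
    have hempty : E.powerset.filter (fun Y => Y.card = N ∧ Y₀ ⊆ Y) = ∅ := by
      rw [Finset.filter_eq_empty_iff]
      rintro Y hY ⟨hN, hsub⟩
      have := Finset.card_le_card hsub
      omega
    rw [hempty, Finset.sum_empty, zero_div, gM_card_gt N (AP E f p) Y₀ hcard]
end

section
/- Let E = E_I ⊔ E_II be a finite subset of R with |E_II| = N, let h_I: E_I → R≥0 and h_II: E_II → R>0, and define f on E by f(x) = h_I(x)²/∏_{y∈E_II}(x−y)² for x ∈ E_I, and f(x) = 1/(h_II(x)² ∏_{y∈E_II, y≠x}(x−y)²) for x ∈ E_II. Let L = [[0, A], [−Aᵀ, 0]] with A(a,b) = h_I(a)h_II(b)/(a−b) for a ∈ E_I, b ∈ E_II. Then for every balanced subset X = {a₁,…,a_d} ⊔ {b₁,…,b_d} (a_i ∈ E_I, b_i ∈ E_II), det L_X = ∏_i h_I(a_i)²h_II(b_i)² · det[1/(a_i−b_j)]², and the L-ensemble probability det L_X/det(1+L) equals the probability of X^Δ = {a₁,…,a_d} ⊔ (E_II \ {b₁,…,b_d}) under the N-point polynomial ensemble with weight f. -/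
/-!
Write `X = {a_i} ⊔ {b_i}`. In this basis `L_X = [[0, M], [-Mᵀ, 0]]` with
`M = diag(h_I(a)) · C · diag(h_II(b))` and `C = [1 / (a_i - b_j)]`, so `det L_X = (det M)²`;
when `X` is unbalanced, `L_X` maps the `E_I`-coordinates into the `E_II`-ones and back, and
`det L_X = 0`. Cauchy's formula `det C · ∏ (a_i - b_j) = ∏_{i<j} (a_j - a_i)(b_i - b_j)` rewrites
`det L_X` as `c · w(X ∆ E_II)`, where `w(Y) = ∏_Y f · ∏_{x ≠ y ∈ Y} |x - y|` is the weight of the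
polynomial ensemble and `c = ∏_{E_II} h_II² · ∏_{x ≠ y ∈ E_II} |x - y|` does not depend on `X`.
Finally `det (1 + L) = ∑_X det L_X`, the involution `X ↦ X ∆ E_II` matches balanced subsets with
`N`-point subsets, and `c` cancels in the ratio.
-/

open Finset Matrix
open scoped symmDiff

namespace Matrix

section OneAdd

variable {n R : Type*} [Fintype n] [DecidableEq n] [CommRing R]

theorem det_piecewise_one (S : Finset n) (M : Matrix n n R) :
    det (S.piecewise M (1 : Matrix n n R)) = (M.submatrix ((↑) : S → n) (↑)).det := by
  refine (det_submatrix_equiv_self (Equiv.sumCompl (· ∈ S)) _).symm.trans ?_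
  have hblock : submatrix (S.piecewise M (1 : Matrix n n R)) (Equiv.sumCompl (· ∈ S))
      (Equiv.sumCompl (· ∈ S)) = fromBlocks (M.submatrix (↑) (↑)) (M.submatrix (↑) (↑)) 0 1 := by
    ext (i | i) j <;>
      change (if (i : n) ∈ S then M i else (1 : Matrix n n R) i) (Equiv.sumCompl _ j) = _
    · rw [if_pos i.2]
      rcases j with j | j <;> rfl
    · rw [if_neg i.2]
      rcases j with j | j
      · exact one_apply_ne fun h => i.2 (h ▸ j.2)
      · simp [one_apply, Subtype.val_inj]
  rw [hblock, det_fromBlocks_zero₂₁, det_one, mul_one]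

theorem det_one_add_eq_sum_det_submatrix (M : Matrix n n R) :
    (1 + M).det = ∑ S : Finset n, (M.submatrix ((↑) : S → n) (↑)).det := by
  rw [add_comm]
  exact ((detRowAlternating (n := n) (R := R)).map_add_univ M (1 : Matrix n n R)).trans
    (sum_congr rfl fun S _ => det_piecewise_one S M)

theorem det_one_add_of_eq_sum_powerset {α : Type*} [DecidableEq α] (E : Finset α)
    (K : α → α → R) :
    (1 + of fun p q : E => K p q).det = ∑ Y ∈ E.powerset, (of fun p q : Y => K p q).det := by
  rw [det_one_add_eq_sum_det_submatrix]
  symm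
  refine sum_nbij' (fun Y => Y.subtype (· ∈ E)) (fun S => S.map (Function.Embedding.subtype _))
    (fun _ _ => mem_univ _) (fun S _ => ?_) (fun Y hY => ?_) (fun S _ => ?_) (fun Y hY => ?_)
  · exact mem_powerset.2 fun x hx => S.property_of_mem_map_subtype hx
  · exact subtype_map_of_mem (mem_powerset.1 hY)
  · ext; simp
  · let e : {p // p ∈ Y.subtype (· ∈ E)} ≃ {x // x ∈ Y} :=
      (Equiv.subtypeEquivRight fun _ => mem_subtype).trans
        (Equiv.subtypeSubtypeEquivSubtype fun hx => mem_powerset.1 hY hx)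
    exact (det_submatrix_equiv_self e _).symm

theorem det_fromBlocks_zero_neg_transpose (M : Matrix n n R) :
    (fromBlocks 0 M (-Mᵀ) 0).det = M.det ^ 2 := by
  have hfactor : fromBlocks 0 M (-Mᵀ) 0 = fromBlocks M 0 0 Mᵀ *
      (fromBlocks 1 1 0 1 * (fromBlocks 1 0 (-1) 1 * fromBlocks 1 1 0 1) :
        Matrix (n ⊕ n) (n ⊕ n) R) := by
    simp [fromBlocks_multiply]
  rw [hfactor, det_mul, det_mul, det_mul, det_fromBlocks_zero₂₁, det_fromBlocks_zero₂₁,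
    det_fromBlocks_zero₁₂, det_transpose, det_one]
  ring

end OneAdd

/-- With `D_P = diagonal (if P i then 2 else 1)`, the hypothesis `hM` says `D_P * M = M * D_Q`,
so `2 ^ #P * det M = 2 ^ #Q * det M`. -/
theorem det_eq_zero_of_card_filter_ne {ι K : Type*} [Fintype ι] [DecidableEq ι] [Field K]
    [CharZero K] (M : Matrix ι ι K) (P Q : ι → Prop) [DecidablePred P] [DecidablePred Q]
    (hM : ∀ i j, M i j ≠ 0 → (P i ↔ Q j)) (hPQ : #{i | P i} ≠ #{j | Q j}) : M.det = 0 := by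
  have hcomm : diagonal (fun i => if P i then (2 : K) else 1) * M =
      M * diagonal (fun j => if Q j then 2 else 1) := by
    ext i j
    rw [diagonal_mul, mul_diagonal]
    by_cases h : M i j = 0
    · simp [h]
    · simp [hM i j h, mul_comm]
  have hprod (R : ι → Prop) [DecidablePred R] :
      ∏ i, (if R i then (2 : K) else 1) = 2 ^ #{i | R i} := by
    rw [prod_ite, prod_const_one, mul_one, prod_const]
  by_contra hdet
  have := congrArg det hcomm
  rw [det_mul, det_mul, det_diagonal, det_diagonal, hprod, hprod, mul_comm M.det] at this
  exact hPQ (Nat.pow_right_injective le_rfl (by exact_mod_cast mul_right_cancel₀ hdet this))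

section Cauchy

open Polynomial

theorem eval_matrix_eq_vandermonde_mul_coeff {R : Type*} [CommRing R] {k : ℕ} (v : Fin k → R)
    (p : Fin k → R[X]) (hp : ∀ j, (p j).natDegree < k) :
    of (fun i j => (p j).eval (v i)) = vandermonde v * of (fun i j : Fin k => (p j).coeff i) := by
  ext i j
  simp_rw [mul_apply, eval, of_apply, eval₂_eq_sum, vandermonde_apply, RingHom.id_apply]
  rw [sum_eq_of_subset _ (fun j => zero_mul (v i ^ j)) (supp_subset_range (hp j)),
    ← Fin.sum_univ_eq_sum_range]
  simp_rw [mul_comm]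

theorem det_cauchy {K : Type*} [Field K] {k : ℕ} (a b : Fin k → K) (hb : Function.Injective b)
    (hab : ∀ i j, a i ≠ b j) :
    det (of fun i j => (a i - b j)⁻¹) * ∏ i, ∏ j, (a i - b j) =
      ∏ i, ∏ j ∈ Ioi i, (a j - a i) * (b i - b j) := by
  -- With `p j = ∏_{m ≠ j} (X - b m)`, the Cauchy matrix is `diag (1 / ∏_m (a i - b m))` times
  -- `W a = [p j (a i)]`, and `W v = V(v) · [coeff]` for `v = a` and for `v = b`, where `W b` is
  -- diagonal.
  set p : Fin k → K[X] := fun j => ∏ m ∈ univ.erase j, (X - C (b m))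
  have hdeg (j : Fin k) : (p j).natDegree < k := by
    rw [natDegree_prod_of_monic _ _ fun m _ => monic_X_sub_C (b m)]
    simp [card_erase_of_mem, j.pos]
  have heval (x : K) (j : Fin k) : (p j).eval x = ∏ m ∈ univ.erase j, (x - b m) := by
    simp [p, eval_prod]
  set W : (Fin k → K) → Matrix (Fin k) (Fin k) K := fun v => of fun i j => (p j).eval (v i)
  have hWb : W b = diagonal fun j => ∏ m ∈ univ.erase j, (b j - b m) := by
    ext i j
    rcases eq_or_ne i j with rfl | hij
    · simp [W, heval]
    · simp only [W, of_apply, heval, diagonal_apply_ne _ hij]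
      exact prod_eq_zero (mem_erase.2 ⟨hij, mem_univ i⟩) (sub_self _)
  have hC : of (fun i j => (a i - b j)⁻¹) = of fun i j => (∏ m, (a i - b m))⁻¹ * W a i j := by
    ext i j
    simp only [W, of_apply, heval]
    rw [← mul_prod_erase univ _ (mem_univ j), mul_inv, mul_assoc,
      inv_mul_cancel₀ (prod_ne_zero_iff.2 fun m _ => sub_ne_zero.2 (hab i m)), mul_one]
  have hWaWb : (W a).det * (vandermonde b).det = (vandermonde a).det * (W b).det := by
    simp only [W, eval_matrix_eq_vandermonde_mul_coeff _ _ hdeg, det_mul]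
    ring
  have hoff : ∏ j, ∏ m ∈ univ.erase j, (b j - b m) =
      (vandermonde b).det * ∏ i, ∏ j ∈ Ioi i, (b i - b j) := by
    rw [det_vandermonde, mul_comm, ← prod_mul_distrib]
    simp_rw [← prod_mul_distrib, ← compl_singleton]
    exact (prod_prod_Ioi_mul_eq_prod_prod_off_diag fun j i => b i - b j).symm
  have hVb : (vandermonde b).det ≠ 0 := det_vandermonde_ne_zero_iff.2 hb
  rw [hC, det_mul_column, prod_inv_distrib, mul_right_comm,
    inv_mul_cancel₀ (prod_ne_zero_iff.2 fun i _ => prod_ne_zero_iff.2 fun m _ =>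
      sub_ne_zero.2 (hab i m)), one_mul]
  apply mul_right_cancel₀ hVb
  rw [hWaWb, hWb, det_diagonal, hoff, det_vandermonde]
  simp_rw [prod_mul_distrib]
  ring

end Cauchy

end Matrix

theorem Finset.prod_offDiag_eq_prod_prod_erase {α M : Type*} [DecidableEq α] [CommMonoid M]
    (S : Finset α) (g : α → α → M) :
    ∏ q ∈ S.offDiag, g q.1 q.2 = ∏ x ∈ S, ∏ y ∈ S.erase x, g x y :=
  prod_finset_product' _ _ _ fun q => by rw [mem_offDiag, mem_erase]; tauto

theorem Finset.card_symmDiff_add_two_mul_card_inter {α : Type*} [DecidableEq α]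
    (s t : Finset α) : #(s ∆ t) + 2 * #(s ∩ t) = #s + #t := by
  have hsub := card_sdiff_add_card_eq_card (inter_subset_union (s := s) (t := t))
  rw [symmDiff_eq_sup_sdiff_inf]
  have := card_union_add_card_inter s t
  simp only [sup_eq_union, inf_eq_inter] at *
  omega

theorem prod_prod_Ioi_sq_sub {k : ℕ} (v : Fin k → ℝ) :
    ∏ i, ∏ j ∈ Ioi i, (v j - v i) ^ 2 = ∏ i, ∏ j ∈ univ.erase i, |v i - v j| := by
  simp_rw [← compl_singleton]
  rw [← prod_prod_Ioi_mul_eq_prod_prod_off_diag fun j i => |v i - v j|]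
  refine prod_congr rfl fun i _ => prod_congr rfl fun j _ => ?_
  rw [abs_sub_comm, abs_mul_abs_self, sq]

theorem Matrix.sq_det_cauchy_mul {k : ℕ} (a b : Fin k → ℝ) (hb : Function.Injective b)
    (hab : ∀ i j, a i ≠ b j) :
    det (of fun i j => (a i - b j)⁻¹) ^ 2 * ∏ i, ∏ j, (a i - b j) ^ 2 =
      (∏ i, ∏ j ∈ univ.erase i, |a i - a j|) * ∏ i, ∏ j ∈ univ.erase i, |b i - b j| := by
  rw [← prod_prod_Ioi_sq_sub, ← prod_prod_Ioi_sq_sub]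
  calc _ = (det (of fun i j => (a i - b j)⁻¹) * ∏ i, ∏ j, (a i - b j)) ^ 2 := by
        simp only [mul_pow, prod_pow]
    _ = (∏ i, ∏ j ∈ Ioi i, (a j - a i) * (b i - b j)) ^ 2 := by rw [det_cauchy a b hb hab]
    _ = _ := by
        simp only [← prod_pow, mul_pow, prod_mul_distrib]
        exact congrArg _ (prod_congr rfl fun i _ => prod_congr rfl fun j _ => by ring)

-- `= ∏_{x < y ∈ S} (x - y) ^ 2`
noncomputable def sqVandermonde (S : Finset ℝ) : ℝ := ∏ x ∈ S, ∏ y ∈ S.erase x, |x - y|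

theorem sqVandermonde_pos (S : Finset ℝ) : 0 < sqVandermonde S :=
  prod_pos fun _ _ => prod_pos fun _ hy => abs_pos.2 (sub_ne_zero.2 (ne_of_mem_erase hy).symm)

theorem prod_prod_erase_sq_sub (S : Finset ℝ) :
    ∏ x ∈ S, ∏ y ∈ S.erase x, (x - y) ^ 2 = sqVandermonde S ^ 2 := by
  simp only [sqVandermonde, ← prod_pow, sq_abs]

theorem sqVandermonde_union {S T : Finset ℝ} (h : Disjoint S T) :
    sqVandermonde (S ∪ T) = sqVandermonde S * sqVandermonde T * ∏ x ∈ S, ∏ y ∈ T, (x - y) ^ 2 := by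
  have hS : ∏ x ∈ S, ∏ y ∈ (S ∪ T).erase x, |x - y| =
      ∏ x ∈ S, (∏ y ∈ S.erase x, |x - y|) * ∏ y ∈ T, |x - y| := prod_congr rfl fun x hx => by
    rw [erase_union_distrib, erase_eq_of_notMem (disjoint_left.1 h hx),
      prod_union (h.mono_left (erase_subset x S))]
  have hT : ∏ x ∈ T, ∏ y ∈ (S ∪ T).erase x, |x - y| =
      ∏ x ∈ T, (∏ y ∈ T.erase x, |x - y|) * ∏ y ∈ S, |x - y| := prod_congr rfl fun x hx => by
    rw [erase_union_distrib, erase_eq_of_notMem (disjoint_right.1 h hx), union_comm,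
      prod_union (h.symm.mono_left (erase_subset x T))]
  have hcross : ∏ x ∈ S, ∏ y ∈ T, (x - y) ^ 2 =
      (∏ x ∈ S, ∏ y ∈ T, |x - y|) * ∏ x ∈ T, ∏ y ∈ S, |x - y| := by
    rw [prod_comm (s := T), ← prod_mul_distrib]
    refine prod_congr rfl fun x _ => ?_
    rw [← prod_mul_distrib]
    exact prod_congr rfl fun y _ => by rw [abs_sub_comm y, abs_mul_abs_self, sq]
  rw [hcross, sqVandermonde, prod_union h, hS, hT, prod_mul_distrib, prod_mul_distrib]
  simp only [sqVandermonde]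
  ring

theorem sqVandermonde_image {ι : Type*} [Fintype ι] [DecidableEq ι] {v : ι → ℝ}
    (hv : Function.Injective v) :
    sqVandermonde (univ.image v) = ∏ i, ∏ j ∈ univ.erase i, |v i - v j| := by
  rw [sqVandermonde, prod_image hv.injOn]
  refine prod_congr rfl fun i _ => ?_
  rw [← image_erase hv, prod_image hv.injOn]

theorem prod_sq_sub_ne_zero {x : ℝ} {V : Finset ℝ} (hx : x ∉ V) : ∏ y ∈ V, (x - y) ^ 2 ≠ 0 :=
  prod_ne_zero_iff.2 fun _ hy => pow_ne_zero 2 (sub_ne_zero.2 fun h => hx (h ▸ hy))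

theorem prod_prod_sq_sub_comm (U V : Finset ℝ) :
    ∏ x ∈ U, ∏ y ∈ V, (x - y) ^ 2 = ∏ x ∈ V, ∏ y ∈ U, (x - y) ^ 2 := by
  rw [prod_comm]
  exact prod_congr rfl fun _ _ => prod_congr rfl fun _ _ => by ring

noncomputable def ensembleWeight (f : ℝ → ℝ) (Y : Finset ℝ) : ℝ :=
  (∏ x ∈ Y, f x) * ∏ q ∈ Y.offDiag, |q.1 - q.2|

theorem ensembleWeight_eq (f : ℝ → ℝ) (Y : Finset ℝ) :
    ensembleWeight f Y = (∏ x ∈ Y, f x) * sqVandermonde Y := by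
  rw [ensembleWeight, prod_offDiag_eq_prod_prod_erase _ fun x y => |x - y|, sqVandermonde]

noncomputable def blockKernel (EI EII : Finset ℝ) (hI hII : ℝ → ℝ) (a b : ℝ) : ℝ :=
  if a ∈ EI ∧ b ∈ EII then hI a * hII b / (a - b)
  else if a ∈ EII ∧ b ∈ EI then -(hI b * hII a / (b - a)) else 0

section Ensemble

variable {EI EII : Finset ℝ} {hI hII f : ℝ → ℝ}

theorem ensembleWeight_union_sdiff_mul (hdisj : Disjoint EI EII)
    (hII0 : ∀ x ∈ EII, hII x ≠ 0)
    (hfI : ∀ x ∈ EI, f x = (hI x) ^ 2 / ∏ y ∈ EII, (x - y) ^ 2)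
    (hfII : ∀ x ∈ EII, f x = 1 / ((hII x) ^ 2 * ∏ y ∈ EII.erase x, (x - y) ^ 2))
    {S T : Finset ℝ} (hS : S ⊆ EI) (hT : T ⊆ EII) :
    (∏ x ∈ EII, hII x ^ 2) * sqVandermonde EII * ensembleWeight f (S ∪ (EII \ T)) *
        ∏ x ∈ S, ∏ y ∈ T, (x - y) ^ 2 =
      (∏ x ∈ S, hI x ^ 2) * (∏ x ∈ T, hII x ^ 2) * (sqVandermonde S * sqVandermonde T) := by
  set R := EII \ T
  have hTR : Disjoint T R := disjoint_sdiff
  have hSR : Disjoint S R := hdisj.mono hS sdiff_subset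
  have hEII : EII = T ∪ R := (union_sdiff_of_subset hT).symm
  have hfS : (∏ x ∈ S, f x) * ((∏ x ∈ S, ∏ y ∈ T, (x - y) ^ 2) *
      ∏ x ∈ S, ∏ y ∈ R, (x - y) ^ 2) = ∏ x ∈ S, hI x ^ 2 := by
    rw [← prod_mul_distrib, ← prod_mul_distrib]
    refine prod_congr rfl fun x hx => ?_
    rw [← prod_union hTR, ← hEII, hfI x (hS hx),
      div_mul_cancel₀ _ (prod_sq_sub_ne_zero (disjoint_left.1 hdisj (hS hx)))]
  have hfR : (∏ x ∈ R, f x) * (∏ x ∈ R, hII x ^ 2) *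
      ((∏ x ∈ R, ∏ y ∈ T, (x - y) ^ 2) * sqVandermonde R ^ 2) = 1 := by
    rw [← prod_prod_erase_sq_sub, ← prod_mul_distrib, ← prod_mul_distrib, ← prod_mul_distrib]
    refine prod_eq_one fun x hx => ?_
    obtain ⟨hxEII, hxT⟩ := mem_sdiff.1 hx
    have herase : EII.erase x = T ∪ R.erase x := by
      rw [hEII, erase_union_distrib, erase_eq_of_notMem hxT]
    rw [← prod_union (hTR.mono_right (erase_subset x R)), ← herase, hfII x hxEII, mul_assoc,
      one_div_mul_cancel (mul_ne_zero (pow_ne_zero 2 (hII0 x hxEII))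
        (prod_sq_sub_ne_zero (notMem_erase x EII)))]
  rw [ensembleWeight_eq, sqVandermonde_union hSR, prod_union hSR, hEII, prod_union hTR,
    sqVandermonde_union hTR, prod_prod_sq_sub_comm T R]
  -- every factor indexed by `R` cancels by `hfR`, and `hfS` turns `∏_S f` into `∏_S hI²`
  linear_combination (∏ x ∈ T, hII x ^ 2) * sqVandermonde T * sqVandermonde S *
    ((∏ x ∈ R, f x) * (∏ x ∈ R, hII x ^ 2) * ((∏ x ∈ R, ∏ y ∈ T, (x - y) ^ 2) *
      sqVandermonde R ^ 2) * hfS + (∏ x ∈ S, hI x ^ 2) * hfR)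

theorem det_blockKernel_image_union (hdisj : Disjoint EI EII) {k : ℕ} {a b : Fin k → ℝ}
    (ha : Function.Injective a) (hb : Function.Injective b) (haI : ∀ i, a i ∈ EI)
    (hbII : ∀ i, b i ∈ EII) :
    det (of fun p q : ↥(univ.image a ∪ univ.image b) => blockKernel EI EII hI hII p q) =
      (∏ i, hI (a i) ^ 2 * hII (b i) ^ 2) * det (of fun i j => (a i - b j)⁻¹) ^ 2 := by
  have haII (i : Fin k) : a i ∉ EII := disjoint_left.1 hdisj (haI i)
  have hab (i j : Fin k) : a i ≠ b j := fun h => haII i (h ▸ hbII j)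
  have hbI (i : Fin k) : b i ∉ EI := disjoint_right.1 hdisj (hbII i)
  let e : Fin k ⊕ Fin k ≃ ↥(univ.image a ∪ univ.image b) := .ofBijective
    (Sum.elim (fun i => ⟨a i, mem_union_left _ (mem_image_of_mem a (mem_univ i))⟩)
      (fun i => ⟨b i, mem_union_right _ (mem_image_of_mem b (mem_univ i))⟩)) <| by
    refine ⟨Function.Injective.sumElim (fun i j h => ha (Subtype.mk.inj h))
      (fun i j h => hb (Subtype.mk.inj h)) (fun i j h => hab i j (Subtype.mk.inj h)), ?_⟩
    rintro ⟨x, hx⟩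
    rcases mem_union.1 hx with h | h <;> obtain ⟨i, -, rfl⟩ := mem_image.1 h
    exacts [⟨.inl i, rfl⟩, ⟨.inr i, rfl⟩]
  have he (x : Fin k ⊕ Fin k) : (e x : ℝ) = Sum.elim a b x := by cases x <;> rfl
  set A : Matrix (Fin k) (Fin k) ℝ := of fun i j => hI (a i) * hII (b j) / (a i - b j)
  have hblock : (of fun p q : ↥(univ.image a ∪ univ.image b) =>
      blockKernel EI EII hI hII p q).submatrix e e = fromBlocks 0 A (-Aᵀ) 0 := by
    ext (i | i) (j | j) <;> simp [he, A, blockKernel, haI, hbII, haII, hbI]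
  have hA : A = diagonal (hI ∘ a) * of (fun i j => (a i - b j)⁻¹) * diagonal (hII ∘ b) := by
    ext i j
    simp [A, diagonal_mul, mul_diagonal, div_eq_mul_inv, mul_right_comm]
  rw [← det_submatrix_equiv_self e, hblock, det_fromBlocks_zero_neg_transpose, hA, det_mul,
    det_mul, det_diagonal, det_diagonal, prod_mul_distrib, prod_pow, prod_pow]
  simp only [Function.comp_apply]
  ring

theorem det_blockKernel_eq_zero_of_card_ne (hdisj : Disjoint EI EII) {Y : Finset ℝ}
    (hY : #(Y ∩ EI) ≠ #(Y ∩ EII)) :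
    det (of fun p q : Y => blockKernel EI EII hI hII p q) = 0 := by
  refine det_eq_zero_of_card_filter_ne _ (fun p => p.1 ∈ EI) (fun q => q.1 ∈ EII)
    (fun p q h => ?_) ?_
  · simp only [of_apply, blockKernel] at h
    split_ifs at h with h1 h2
    · exact iff_of_true h1.1 h1.2
    · exact iff_of_false (disjoint_right.1 hdisj h2.1) (disjoint_left.1 hdisj h2.2)
    · exact absurd rfl h
  · simpa [filter_attach (· ∈ EI), filter_attach (· ∈ EII), filter_mem_eq_inter] using hY

theorem prod_sq_mul_sq_det_cauchy_eq_ensembleWeight (hdisj : Disjoint EI EII)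
    (hII0 : ∀ x ∈ EII, hII x ≠ 0)
    (hfI : ∀ x ∈ EI, f x = (hI x) ^ 2 / ∏ y ∈ EII, (x - y) ^ 2)
    (hfII : ∀ x ∈ EII, f x = 1 / ((hII x) ^ 2 * ∏ y ∈ EII.erase x, (x - y) ^ 2))
    {k : ℕ} {a b : Fin k → ℝ} (ha : Function.Injective a) (hb : Function.Injective b)
    (haI : ∀ i, a i ∈ EI) (hbII : ∀ i, b i ∈ EII) :
    (∏ i, hI (a i) ^ 2 * hII (b i) ^ 2) * det (of fun i j => (a i - b j)⁻¹) ^ 2 =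
      (∏ x ∈ EII, hII x ^ 2) * sqVandermonde EII *
        ensembleWeight f (univ.image a ∪ (EII \ univ.image b)) := by
  have hab (i j : Fin k) : a i ≠ b j := fun h => disjoint_left.1 hdisj (haI i) (h ▸ hbII j)
  have hcross : ∏ x ∈ univ.image a, ∏ y ∈ univ.image b, (x - y) ^ 2 =
      ∏ i, ∏ j, (a i - b j) ^ 2 := by
    rw [prod_image ha.injOn]
    exact prod_congr rfl fun i _ => prod_image hb.injOn
  have hcross_ne : ∏ i, ∏ j, (a i - b j) ^ 2 ≠ 0 :=
    prod_ne_zero_iff.2 fun i _ => prod_ne_zero_iff.2 fun j _ =>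
      pow_ne_zero 2 (sub_ne_zero.2 (hab i j))
  apply mul_right_cancel₀ hcross_ne
  rw [← hcross, ensembleWeight_union_sdiff_mul hdisj hII0 hfI hfII
    (image_subset_iff.2 fun i _ => haI i) (image_subset_iff.2 fun i _ => hbII i), hcross,
    mul_assoc, sq_det_cauchy_mul a b hb hab, prod_image ha.injOn, prod_image hb.injOn,
    sqVandermonde_image ha, sqVandermonde_image hb, prod_mul_distrib]

theorem det_blockKernel_eq_of_card_eq (hdisj : Disjoint EI EII) (hII0 : ∀ x ∈ EII, hII x ≠ 0)
    (hfI : ∀ x ∈ EI, f x = (hI x) ^ 2 / ∏ y ∈ EII, (x - y) ^ 2)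
    (hfII : ∀ x ∈ EII, f x = 1 / ((hII x) ^ 2 * ∏ y ∈ EII.erase x, (x - y) ^ 2))
    {Y : Finset ℝ} (hY : Y ⊆ EI ∪ EII) (hbal : #(Y ∩ EI) = #(Y ∩ EII)) :
    det (of fun p q : Y => blockKernel EI EII hI hII p q) =
      (∏ x ∈ EII, hII x ^ 2) * sqVandermonde EII * ensembleWeight f (Y ∆ EII) := by
  set a := (Y ∩ EI).orderEmbOfFin rfl
  set b := (Y ∩ EII).orderEmbOfFin hbal.symm
  have himga : univ.image a = Y ∩ EI := image_orderEmbOfFin_univ _ _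
  have himgb : univ.image b = Y ∩ EII := image_orderEmbOfFin_univ _ _
  have hY' : univ.image a ∪ univ.image b = Y := by
    rw [himga, himgb, ← inter_union_distrib_left, inter_eq_left.2 hY]
  have hΔ : univ.image a ∪ (EII \ univ.image b) = Y ∆ EII := by
    rw [himga, himgb]
    ext x
    simp only [mem_union, mem_inter, mem_sdiff, mem_symmDiff]
    have h1 : x ∈ EI → x ∉ EII := fun h => disjoint_left.1 hdisj h
    have h2 : x ∈ Y → x ∈ EI ∨ x ∈ EII := fun h => mem_union.1 (hY h)
    tauto
  have haI (i) : a i ∈ EI := (mem_inter.1 (himga ▸ mem_image_of_mem a (mem_univ i))).2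
  have hbII (i) : b i ∈ EII := (mem_inter.1 (himgb ▸ mem_image_of_mem b (mem_univ i))).2
  have hminor := det_blockKernel_image_union (hI := hI) (hII := hII) hdisj a.injective
    b.injective haI hbII
  rw [hY'] at hminor
  rw [hminor, prod_sq_mul_sq_det_cauchy_eq_ensembleWeight hdisj hII0 hfI hfII a.injective
    b.injective haI hbII, hΔ]

theorem card_symmDiff_eq_card_iff (hdisj : Disjoint EI EII) {Y : Finset ℝ}
    (hY : Y ⊆ EI ∪ EII) : #(Y ∆ EII) = #EII ↔ #(Y ∩ EI) = #(Y ∩ EII) := by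
  have h1 := card_symmDiff_add_two_mul_card_inter Y EII
  have h2 : #(Y ∩ EI) + #(Y ∩ EII) = #Y := by
    rw [← card_union_of_disjoint (hdisj.mono inter_subset_right inter_subset_right),
      ← inter_union_distrib_left, inter_eq_left.2 hY]
  omega

theorem det_one_add_blockKernel (hdisj : Disjoint EI EII) (hII0 : ∀ x ∈ EII, hII x ≠ 0)
    (hfI : ∀ x ∈ EI, f x = (hI x) ^ 2 / ∏ y ∈ EII, (x - y) ^ 2)
    (hfII : ∀ x ∈ EII, f x = 1 / ((hII x) ^ 2 * ∏ y ∈ EII.erase x, (x - y) ^ 2)) :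
    det (1 + of fun p q : ↥(EI ∪ EII) => blockKernel EI EII hI hII p q) =
      (∏ x ∈ EII, hII x ^ 2) * sqVandermonde EII *
        ∑ Z ∈ (EI ∪ EII).powerset.filter (fun Z => #Z = #EII), ensembleWeight f Z := by
  have hsub {Y : Finset ℝ} (hY : Y ⊆ EI ∪ EII) : Y ∆ EII ⊆ EI ∪ EII :=
    symmDiff_le (le_sup_of_le_right hY) (le_sup_of_le_right subset_union_right)
  rw [det_one_add_of_eq_sum_powerset, ← sum_filter_of_ne (p := fun Y => #(Y ∩ EI) = #(Y ∩ EII))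
    fun Y _ h => by_contra fun hbal => h (det_blockKernel_eq_zero_of_card_ne hdisj hbal),
    mul_sum]
  refine sum_nbij' (· ∆ EII) (· ∆ EII) (fun Y hY => ?_) (fun Z hZ => ?_)
    (fun Y _ => symmDiff_symmDiff_cancel_right _ _) (fun Z _ => symmDiff_symmDiff_cancel_right _ _)
    (fun Y hY => ?_)
  · obtain ⟨hYE, hbal⟩ := mem_filter.1 hY
    exact mem_filter.2 ⟨mem_powerset.2 (hsub (mem_powerset.1 hYE)),
      (card_symmDiff_eq_card_iff hdisj (mem_powerset.1 hYE)).2 hbal⟩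
  · obtain ⟨hZE, hcard⟩ := mem_filter.1 hZ
    have hΔ := hsub (mem_powerset.1 hZE)
    refine mem_filter.2 ⟨mem_powerset.2 hΔ, (card_symmDiff_eq_card_iff hdisj hΔ).1 ?_⟩
    rwa [symmDiff_symmDiff_cancel_right]
  · obtain ⟨hYE, hbal⟩ := mem_filter.1 hY
    exact det_blockKernel_eq_of_card_eq hdisj hII0 hfI hfII (mem_powerset.1 hYE) hbal

end Ensemble

theorem stmt_17_general (N d : ℕ) (EI EII : Finset ℝ) (hdisj : Disjoint EI EII)
    (hcard : EII.card = N)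
    (hI hII : ℝ → ℝ) (hII0 : ∀ x ∈ EII, 0 < hII x)
    (f : ℝ → ℝ)
    (hfI : ∀ x ∈ EI, f x = (hI x) ^ 2 / ∏ y ∈ EII, (x - y) ^ 2)
    (hfII : ∀ x ∈ EII, f x = 1 / ((hII x) ^ 2 * ∏ y ∈ EII.erase x, (x - y) ^ 2))
    (Lker : ℝ → ℝ → ℝ)
    (hLker : ∀ a b : ℝ, Lker a b =
      if a ∈ EI ∧ b ∈ EII then hI a * hII b / (a - b)
      else if a ∈ EII ∧ b ∈ EI then -(hI b * hII a / (b - a)) else 0)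
    (A B : Fin d → ℝ) (hA : Function.Injective A) (hB : Function.Injective B)
    (hAI : ∀ i, A i ∈ EI) (hBII : ∀ i, B i ∈ EII) :
    let X : Finset ℝ := Finset.image A Finset.univ ∪ Finset.image B Finset.univ
    let Xd : Finset ℝ := Finset.image A Finset.univ ∪ (EII \ Finset.image B Finset.univ)
    let dX := Matrix.det (Matrix.of fun a b : {x // x ∈ X} => Lker (a : ℝ) (b : ℝ))
    dX = (∏ i : Fin d, (hI (A i)) ^ 2 * (hII (B i)) ^ 2) *
        (Matrix.det (Matrix.of fun i j : Fin d => (A i - B j)⁻¹)) ^ 2 ∧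
    dX / Matrix.det
        (1 + Matrix.of fun a b : {x // x ∈ EI ∪ EII} => Lker (a : ℝ) (b : ℝ))
      = ((∏ x ∈ Xd, f x) * ∏ q ∈ Xd.offDiag, |q.1 - q.2|) /
        (∑ Y ∈ (EI ∪ EII).powerset.filter (fun Y => Y.card = N),
          ((∏ x ∈ Y, f x) * ∏ q ∈ Y.offDiag, |q.1 - q.2|)) := by
  intro X Xd dX
  obtain rfl : Lker = blockKernel EI EII hI hII := funext₂ hLker
  have hII_ne (x) (hx : x ∈ EII) : hII x ≠ 0 := (hII0 x hx).ne'
  have hminor : dX = _ := det_blockKernel_image_union hdisj hA hB hAI hBII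
  refine ⟨hminor, ?_⟩
  have hconst : (∏ x ∈ EII, hII x ^ 2) * sqVandermonde EII ≠ 0 :=
    (mul_pos (prod_pos fun x hx => pow_pos (hII0 x hx) 2) (sqVandermonde_pos EII)).ne'
  rw [hminor,
    prod_sq_mul_sq_det_cauchy_eq_ensembleWeight hdisj hII_ne hfI hfII hA hB hAI hBII,
    det_one_add_blockKernel hdisj hII_ne hfI hfII, hcard]
  exact mul_div_mul_left _ _ hconst

/-- The relation between the L-ensemble built from the integrable
kernel `A(a,b) = h_I(a)h_II(b)/(a-b)` and the `N`-point polynomial ensemble with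
the associated weight `f`, via the particle/hole involution `Δ` with respect
to `E_II`. -/
theorem stmt_17 (N d : ℕ) (EI EII : Finset ℝ) (hdisj : Disjoint EI EII)
    (hcard : EII.card = N)
    (hI hII : ℝ → ℝ) (hI0 : ∀ x ∈ EI, 0 ≤ hI x) (hII0 : ∀ x ∈ EII, 0 < hII x)
    (f : ℝ → ℝ)
    (hfI : ∀ x ∈ EI, f x = (hI x) ^ 2 / ∏ y ∈ EII, (x - y) ^ 2)
    (hfII : ∀ x ∈ EII, f x = 1 / ((hII x) ^ 2 * ∏ y ∈ EII.erase x, (x - y) ^ 2))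
    (Lker : ℝ → ℝ → ℝ)
    (hLker : ∀ a b : ℝ, Lker a b =
      if a ∈ EI ∧ b ∈ EII then hI a * hII b / (a - b)
      else if a ∈ EII ∧ b ∈ EI then -(hI b * hII a / (b - a)) else 0)
    (A B : Fin d → ℝ) (hA : Function.Injective A) (hB : Function.Injective B)
    (hAI : ∀ i, A i ∈ EI) (hBII : ∀ i, B i ∈ EII) :
    let X : Finset ℝ := Finset.image A Finset.univ ∪ Finset.image B Finset.univ
    let Xd : Finset ℝ := Finset.image A Finset.univ ∪ (EII \ Finset.image B Finset.univ)
    let dX := Matrix.det (Matrix.of fun a b : {x // x ∈ X} => Lker (a : ℝ) (b : ℝ))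
    dX = (∏ i : Fin d, (hI (A i)) ^ 2 * (hII (B i)) ^ 2) *
        (Matrix.det (Matrix.of fun i j : Fin d => (A i - B j)⁻¹)) ^ 2 ∧
    dX / Matrix.det
        (1 + Matrix.of fun a b : {x // x ∈ EI ∪ EII} => Lker (a : ℝ) (b : ℝ))
      = ((∏ x ∈ Xd, f x) * ∏ q ∈ Xd.offDiag, |q.1 - q.2|) /
        (∑ Y ∈ (EI ∪ EII).powerset.filter (fun Y => Y.card = N),
          ((∏ x ∈ Y, f x) * ∏ q ∈ Y.offDiag, |q.1 - q.2|)) :=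
  stmt_17_general N d EI EII hdisj hcard hI hII hII0 f hfI hfII Lker hLker A B hA hB hAI hBII
end
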